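/- arXiv:2011.00437 — 15 statements merged into one kernel-verified Lean document; each statement's English description precedes it below -/
import Mathlib

section
/- For every cardinal number c there exist a complete Boolean algebra B and a function g : ℕ → B such that c ≤ #B and B is generated by the range of g as a complete Boolean algebra, i.e., the only subset of B that contains every g(n) and is closed under complements and under suprema of arbitrary subsets is B itself. -/
/-!
Take `B` to be the regular open algebra of `ℕ → κ`, where `κ` is a discrete well-order of
cardinality `c`; the clopen sets `{f | f 0 = a}` are pairwise distinct elements of `B`, so
`c ≤ #B`. The countably many clopens `{f | f m < f n}` generate `B`. Indeed, by well-founded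
induction on `a`, a complete subalgebra containing them contains every `{f | f n = a}`:
`{f | a ≤ f m}` is the complement of the join of the `{f | f m = b}` with `b < a`, and the join
of the `{f | a ≤ f m < f n}` over all `m` is `{f | a < f n}`, because the union is dense in it
(move an unconstrained coordinate `m` to `a`). Finite meets of the sets `{f | f n = a}` form a
base of the topology, and every regular open set is the join of the basic sets it contains.
-/

open Heyting TopologicalSpace Set Filter Topology

-- The Boolean algebra comes first, so that only `sSup` and `sInf` are taken from the lift.
noncomputable instance Heyting.Regular.instCompleteBooleanAlgebra {α : Type*} [Order.Frame α] :
    CompleteBooleanAlgebra (Regular α) :=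
  { Regular.instBooleanAlgebra, Regular.gi.liftCompleteLattice with }

structure IsCompleteBooleanSubalgebra {B : Type*} [CompleteBooleanAlgebra B] (S : Set B) :
    Prop where
  compl_mem ⦃b : B⦄ : b ∈ S → bᶜ ∈ S
  sSup_mem ⦃T : Set B⦄ : T ⊆ S → sSup T ∈ S

namespace IsCompleteBooleanSubalgebra

variable {B : Type*} [CompleteBooleanAlgebra B] {S : Set B}

theorem iSup_mem (hS : IsCompleteBooleanSubalgebra S) {ι : Sort*} {f : ι → B}
    (hf : ∀ i, f i ∈ S) : ⨆ i, f i ∈ S :=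
  hS.sSup_mem (range_subset_iff.2 hf)

theorem inf_mem (hS : IsCompleteBooleanSubalgebra S) {a b : B} (ha : a ∈ S) (hb : b ∈ S) :
    a ⊓ b ∈ S := by
  rw [← compl_compl (a ⊓ b), compl_inf, sup_eq_iSup]
  exact hS.compl_mem (hS.iSup_mem fun p => by cases p <;> exact hS.compl_mem ‹_›)

theorem finsetInf_mem (hS : IsCompleteBooleanSubalgebra S) {ι : Type*} {s : Finset ι}
    {f : ι → B} (hf : ∀ i ∈ s, f i ∈ S) : s.inf f ∈ S :=
  Finset.inf_induction (by simpa using hS.compl_mem (hS.sSup_mem (empty_subset S)))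
    (fun _ ha _ hb => hS.inf_mem ha hb) hf

end IsCompleteBooleanSubalgebra

abbrev TopologicalSpace.RegularOpens (X : Type*) [TopologicalSpace X] := Regular (Opens X)

namespace TopologicalSpace.RegularOpens

variable {X : Type*} [TopologicalSpace X]

theorem coe_finset_inf {ι : Type*} (s : Finset ι) (u : ι → RegularOpens X) :
    ((s.inf u : RegularOpens X) : Set X) = s.inf fun i => (u i : Set X) := by
  induction s using Finset.cons_induction with
  | empty => rfl
  | cons i s _ ih => rw [Finset.inf_cons, Finset.inf_cons, ← ih]; rfl

theorem coe_iSup {ι : Sort*} (u : ι → RegularOpens X) :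
    ((⨆ i, u i : RegularOpens X) : Set X) = interior (closure (⋃ i, (u i : Set X))) := by
  change (((sSup (Regular.val '' range u))ᶜᶜ : Opens X) : Set X) = _
  rw [Opens.coe_compl_eq_interior_compl, Opens.coe_compl_eq_interior_compl,
    interior_compl (s := ((sSup (Regular.val '' range u) : Opens X) : Set X)), compl_compl,
    Opens.coe_sSup, biUnion_image, biUnion_range]

theorem coe_subset_coe {u v : RegularOpens X} : (u : Set X) ⊆ v ↔ u ≤ v :=
  Iff.rfl

theorem iSup_eq_of_subset_closure {ι : Sort*} {u : ι → RegularOpens X} {v : RegularOpens X}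
    (hle : ∀ i, u i ≤ v) (hv : (v : Set X) ⊆ closure (⋃ i, (u i : Set X))) : ⨆ i, u i = v :=
  le_antisymm (iSup_le hle) <| by
    change (v : Set X) ⊆ ((⨆ i, u i : RegularOpens X) : Set X)
    rw [coe_iSup]
    exact interior_maximal hv (v : Opens X).isOpen

theorem eq_univ_of_forall_exists_subset {S : Set (RegularOpens X)}
    (hS : IsCompleteBooleanSubalgebra S)
    (hbasis : ∀ x (V : Set X), IsOpen V → x ∈ V → ∃ u ∈ S, x ∈ (u : Set X) ∧ (u : Set X) ⊆ V) :
    S = univ := by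
  refine eq_univ_of_forall fun v => ?_
  have hv : ⨆ w : {w // w ∈ S ∧ w ≤ v}, w.1 = v := by
    refine iSup_eq_of_subset_closure (fun w => w.2.2) fun x hx => subset_closure ?_
    obtain ⟨w, hwS, hxw, hwv⟩ := hbasis x v (v : Opens X).isOpen hx
    exact mem_iUnion.2 ⟨⟨w, hwS, hwv⟩, hxw⟩
  exact hv ▸ hS.iSup_mem fun w => w.2.1

end TopologicalSpace.RegularOpens

namespace TopologicalSpace.Clopens

variable {X : Type*} [TopologicalSpace X]

theorem toOpens_compl (s : Clopens X) : sᶜ.toOpens = s.toOpensᶜ :=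
  Opens.ext <| by rw [Opens.coe_compl_eq_interior_compl]; exact sᶜ.isOpen.interior_eq.symm

theorem isRegular_toOpens (s : Clopens X) : IsRegular s.toOpens := by
  rw [Heyting.IsRegular, ← toOpens_compl, ← toOpens_compl, compl_compl]

def toRegularOpens (s : Clopens X) : RegularOpens X := ⟨s.toOpens, s.isRegular_toOpens⟩

theorem toRegularOpens_inf (s t : Clopens X) :
    toRegularOpens (s ⊓ t) = toRegularOpens s ⊓ toRegularOpens t :=
  rfl

theorem toRegularOpens_compl (s : Clopens X) : toRegularOpens sᶜ = (toRegularOpens s)ᶜ :=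
  Regular.coe_injective s.toOpens_compl

@[simp]
theorem coe_toRegularOpens (s : Clopens X) : ((toRegularOpens s : RegularOpens X) : Set X) = s :=
  rfl

theorem toRegularOpens_injective : Function.Injective (toRegularOpens (X := X)) :=
  fun _ _ h => Clopens.ext (congrArg (fun v : RegularOpens X => (v : Set X)) h)

end TopologicalSpace.Clopens

theorem tendsto_update_atTop_nhds {α : Type*} [TopologicalSpace α] (f : ℕ → α) (a : α) :
    Tendsto (fun k => Function.update f k a) atTop (𝓝 f) :=
  tendsto_pi_nhds.2 fun i => tendsto_const_nhds.congr' <|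
    eventually_atTop.2 ⟨i + 1, fun k hk => (Function.update_of_ne (by omega) a f).symm⟩

namespace GaifmanHales

open Clopens

variable {κ : Type*} [TopologicalSpace κ] [DiscreteTopology κ]

def evalClopens (n : ℕ) (s : Set κ) : Clopens (ℕ → κ) :=
  ⟨{f | f n ∈ s}, (isClopen_discrete s).preimage (continuous_apply n)⟩

@[simp]
theorem mem_evalClopens {n : ℕ} {s : Set κ} {f : ℕ → κ} : f ∈ evalClopens n s ↔ f n ∈ s :=
  Iff.rfl

def ltClopens [LT κ] (m n : ℕ) : Clopens (ℕ → κ) :=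
  ⟨{f | f m < f n},
    (isClopen_discrete {p : κ × κ | p.1 < p.2}).preimage
      (f := fun g : ℕ → κ => (g m, g n)) ((continuous_apply m).prodMk (continuous_apply n))⟩

@[simp]
theorem mem_ltClopens [LT κ] {m n : ℕ} {f : ℕ → κ} : f ∈ ltClopens m n ↔ f m < f n :=
  Iff.rfl

theorem evalClopens_singleton_injective (n : ℕ) :
    Function.Injective fun a : κ => evalClopens n {a} := by
  intro a b h
  simpa using congrArg (fun s : Clopens (ℕ → κ) => (fun _ => a : ℕ → κ) ∈ s) h

theorem iSup_evalClopens_singleton (m : ℕ) (s : Set κ) :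
    ⨆ b : s, toRegularOpens (evalClopens m {b.1}) = toRegularOpens (evalClopens m s) :=
  RegularOpens.iSup_eq_of_subset_closure
    (fun b => RegularOpens.coe_subset_coe.1 fun f hf => by simp_all)
    fun f hf => subset_closure (mem_iUnion.2 ⟨⟨f m, hf⟩, rfl⟩)

theorem iSup_evalClopens_Ici_inf_ltClopens [LinearOrder κ] (n : ℕ) (a : κ) :
    ⨆ m, toRegularOpens (evalClopens m (Ici a)) ⊓ toRegularOpens (ltClopens m n) =
      toRegularOpens (evalClopens n (Ioi a)) := by
  refine RegularOpens.iSup_eq_of_subset_closure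
    (fun m => RegularOpens.coe_subset_coe.1 fun f ⟨hfm, hmn⟩ => hfm.trans_lt hmn)
    fun f (hf : a < f n) => ?_
  refine mem_closure_of_tendsto (tendsto_update_atTop_nhds f a) ?_
  filter_upwards [eventually_gt_atTop n] with k hk
  refine mem_iUnion.2 ⟨k, ?_, ?_⟩ <;> simp [hk.ne, hf]

theorem toRegularOpens_evalClopens_singleton_mem [LinearOrder κ] [WellFoundedLT κ]
    {S : Set (RegularOpens (ℕ → κ))} (hS : IsCompleteBooleanSubalgebra S)
    (hlt : ∀ m n, toRegularOpens (ltClopens (κ := κ) m n) ∈ S) (n : ℕ) (a : κ) :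
    toRegularOpens (evalClopens n {a}) ∈ S := by
  induction a using WellFoundedLT.induction generalizing n with
  | _ a ih =>
  have hIci : ∀ m, toRegularOpens (evalClopens m (Ici a)) ∈ S := fun m => by
    rw [← compl_Iio, show evalClopens m (Iio a)ᶜ = (evalClopens m (Iio a))ᶜ from rfl,
      toRegularOpens_compl, ← iSup_evalClopens_singleton]
    exact hS.compl_mem (hS.iSup_mem fun b => ih b b.2 m)
  have hIoi : toRegularOpens (evalClopens n (Ioi a)) ∈ S := by
    rw [← iSup_evalClopens_Ici_inf_ltClopens]
    exact hS.iSup_mem fun m => hS.inf_mem (hIci m) (hlt m n)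
  rw [← Icc_self, ← Ici_inter_Iic, ← compl_Ioi,
    show evalClopens n (Ici a ∩ (Ioi a)ᶜ) = evalClopens n (Ici a) ⊓ (evalClopens n (Ioi a))ᶜ
      from rfl, toRegularOpens_inf, toRegularOpens_compl]
  exact hS.inf_mem (hIci n) (hS.compl_mem hIoi)

theorem eq_univ_of_ltClopens_mem [LinearOrder κ] [WellFoundedLT κ]
    {S : Set (RegularOpens (ℕ → κ))} (hS : IsCompleteBooleanSubalgebra S)
    (hlt : ∀ m n, toRegularOpens (ltClopens (κ := κ) m n) ∈ S) : S = univ := by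
  refine RegularOpens.eq_univ_of_forall_exists_subset hS fun f V hV hfV => ?_
  obtain ⟨I, t, ht, hIV⟩ := isOpen_pi_iff.1 hV f hfV
  refine ⟨I.inf fun i => toRegularOpens (evalClopens i {f i}),
    hS.finsetInf_mem fun i _ => toRegularOpens_evalClopens_singleton_mem hS hlt i (f i), ?_, ?_⟩
  · rw [RegularOpens.coe_finset_inf]
    simp [Finset.inf_eq_iInf]
  · intro g hg
    rw [RegularOpens.coe_finset_inf] at hg
    simp only [Finset.inf_eq_iInf, iInf_eq_iInter, mem_iInter, SetLike.mem_coe,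
      coe_toRegularOpens, mem_evalClopens, mem_singleton_iff] at hg
    exact hIV fun i hi => (hg i hi).symm ▸ (ht i hi).2

end GaifmanHales

/-- **Gaifman–Hales.** For every cardinal `c` there exist a complete Boolean algebra `B` and a
function `g : ℕ → B` such that `c ≤ #B` and `B` is generated by the range of `g` as a complete
Boolean algebra: the only subset of `B` containing every `g n` and closed under complements and
under suprema of arbitrary subsets is `B` itself. -/
theorem stmt_0 (c : Cardinal.{u}) :
    ∃ (B : Type u) (_ : CompleteBooleanAlgebra B) (g : ℕ → B),
      c ≤ Cardinal.mk B ∧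
      ∀ S : Set B, (∀ n : ℕ, g n ∈ S) → (∀ b ∈ S, bᶜ ∈ S) →
        (∀ T : Set B, T ⊆ S → sSup T ∈ S) → S = Set.univ := by
  let _ : TopologicalSpace c.ord.ToType := ⊥
  have : DiscreteTopology c.ord.ToType := ⟨rfl⟩
  refine ⟨RegularOpens (ℕ → c.ord.ToType), inferInstance,
    fun k => Clopens.toRegularOpens (GaifmanHales.ltClopens k.unpair.1 k.unpair.2), ?_,
    fun S hg hc hs => GaifmanHales.eq_univ_of_ltClopens_mem ⟨hc, hs⟩ fun m n => ?_⟩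
  · calc c = Cardinal.mk c.ord.ToType := (Cardinal.mk_ord_toType c).symm
      _ ≤ _ := Cardinal.mk_le_of_injective
        (Clopens.toRegularOpens_injective.comp (GaifmanHales.evalClopens_singleton_injective 0))
  · simpa using hg (Nat.pair m n)
end

section
/- Let A be a frame. The map ν : A → A defined by ν(a) = aᶜᶜ, where aᶜ = a ⇨ ⊥ is the Heyting pseudocomplement, is a nucleus on A with ν(⊥) = ⊥, and it is the greatest dense nucleus: every nucleus j on A with j(⊥) = ⊥ satisfies j(a) ≤ ν(a) for all a ∈ A. -/
universe u

/-- A nucleus on a frame `A`: a binary-meet-preserving, inflationary, idempotent map `A → A`. -/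
def IsNucleus {A : Type u} [Order.Frame A] (j : A → A) : Prop :=
  (∀ a b : A, j (a ⊓ b) = j a ⊓ j b) ∧ (∀ a : A, a ≤ j a) ∧ (∀ a : A, j (j a) = j a)

theorem isNucleus_compl_compl {A : Type u} [Order.Frame A] : IsNucleus (fun a : A => aᶜᶜ) :=
  ⟨compl_compl_inf_distrib, fun _ => le_compl_compl, fun _ => compl_compl_compl _⟩

theorem le_compl_compl_of_map_inf_of_map_bot {α : Type*} [HeytingAlgebra α] {j : α → α}
    (map_inf : ∀ a b, j (a ⊓ b) = j a ⊓ j b) (le_map : ∀ a, a ≤ j a) (map_bot : j ⊥ = ⊥)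
    (a : α) : j a ≤ aᶜᶜ := by
  have disjoint_map_compl : j a ⊓ aᶜ ≤ ⊥ :=
    calc j a ⊓ aᶜ ≤ j a ⊓ j aᶜ := inf_le_inf_left _ (le_map _)
      _ = j (a ⊓ aᶜ) := (map_inf _ _).symm
      _ = ⊥ := by rw [inf_compl_self, map_bot]
  exact le_compl_iff_disjoint_right.mpr (disjoint_iff_inf_le.mpr disjoint_map_compl)

/-- The double-pseudocomplement map `a ↦ aᶜᶜ` on a frame is a dense nucleus (`ν ⊥ = ⊥`), and it is
the greatest dense nucleus. -/
theorem stmt_1 {A : Type u} [Order.Frame A] :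
    IsNucleus (fun a : A => aᶜᶜ) ∧ ((⊥ : A)ᶜᶜ = ⊥) ∧
      ∀ j : A → A, IsNucleus j → j ⊥ = ⊥ → ∀ a : A, j a ≤ aᶜᶜ :=
  ⟨isNucleus_compl_compl, by rw [compl_bot, compl_top],
    fun _ hj map_bot => le_compl_compl_of_map_inf_of_map_bot hj.1 hj.2.1 map_bot⟩
end

section
/- For any frame A, the frame N(A) of all nuclei on A (ordered pointwise) is zero-dimensional and ultraparacompact: every nucleus is the supremum of a set of complemented nuclei, and for every set S of nuclei with supremum the top nucleus there is a pairwise disjoint set T of nuclei, each element of which lies below some element of S, whose supremum is again the top nucleus. -/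
universe u

/-- The nuclei on a frame `A`, ordered pointwise. -/
abbrev Nuc (A : Type u) [Order.Frame A] : Type u := {j : A → A // IsNucleus j}

/-- The identity nucleus, the least nucleus. -/
def idNuc (A : Type u) [Order.Frame A] : Nuc A :=
  ⟨fun x => x, fun _ _ => rfl, fun _ => le_rfl, fun _ => rfl⟩

/-- The constant-`⊤` nucleus, the greatest nucleus. -/
def topNuc (A : Type u) [Order.Frame A] : Nuc A :=
  ⟨fun _ => ⊤, by
    refine ⟨fun a b => ?_, fun a => le_top, fun a => rfl⟩
    show (⊤ : A) = ⊤ ⊓ ⊤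
    rw [top_inf_eq]⟩

/-- A nucleus is complemented if some nucleus has infimum the least nucleus (the identity) and
supremum the greatest nucleus (the constant `⊤` map) with it, in the lattice of nuclei. -/
def NucComplemented {A : Type u} [Order.Frame A] (k : Nuc A) : Prop :=
  ∃ k' : Nuc A, IsGLB {k, k'} (idNuc A) ∧ IsLUB {k, k'} (topNuc A)


/-!
Write `c b = (b ⊔ ·)` and `o a = (a ⇨ ·)` for the closed and open nuclei; `c a` and `o a` are
complements. Every nucleus `j` is the join of the complemented nuclei `c (j a) ⊓ o a`.

A cover `S` of the top nucleus has no common fixed point other than `⊤`, since `(· ⇨ a) ⇨ a` is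
the largest nucleus fixing `a`. So every `a ≠ ⊤` is moved by some `s ∈ S`, and iterating such moves
transfinitely gives a chain `aₒ = s (⨆ i < o, aᵢ)` which must reach `⊤` for cardinality reasons.
The nuclei `c aₒ ⊓ o (⨆ i < o, aᵢ)` are pairwise disjoint, each lies below the `s` used at stage
`o`, and every value of a nucleus above all of them dominates every `aₒ`, hence is `⊤`.
-/

open Set

section ClosedOpen

variable {X : Type*} [Order.Frame X]

def closedNucleus (b : X) : Nucleus X where
  toFun y := b ⊔ y
  map_inf' _ _ := sup_inf_left _ _ _
  idempotent' _ := by simp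
  le_apply' _ := le_sup_right

def openNucleus (a : X) : Nucleus X where
  toFun y := a ⇨ y
  map_inf' _ _ := himp_inf_distrib _ _ _
  idempotent' _ := by simp
  le_apply' _ := le_himp

@[simp] lemma closedNucleus_apply (b y : X) : closedNucleus b y = b ⊔ y := rfl

@[simp] lemma openNucleus_apply (a y : X) : openNucleus a y = a ⇨ y := rfl

lemma closedNucleus_mono : Monotone (closedNucleus : X → Nucleus X) :=
  fun _ _ h _ => sup_le_sup_right h _

lemma isCompl_closedNucleus_openNucleus (a : X) : IsCompl (closedNucleus a) (openNucleus a) where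
  disjoint := disjoint_iff.2 <| Nucleus.ext fun y => by simp [inf_sup_right]
  codisjoint n hc ho x :=
    calc ⊤ = a ⇨ n x := (himp_eq_top_iff.2 (le_sup_left.trans (hc x))).symm
      _ ≤ n (n x) := ho (n x)
      _ = n x := n.idempotent x

lemma isComplemented_closedNucleus_inf_openNucleus (a b : X) :
    IsComplemented (closedNucleus b ⊓ openNucleus a) :=
  IsComplemented.inf ⟨_, isCompl_closedNucleus_openNucleus b⟩
    ⟨_, (isCompl_closedNucleus_openNucleus a).symm⟩

lemma disjoint_closedNucleus_inf_openNucleus {a₁ b₁ a₂ b₂ : X} (h : b₁ ≤ a₂) :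
    Disjoint (closedNucleus b₁ ⊓ openNucleus a₁) (closedNucleus b₂ ⊓ openNucleus a₂) :=
  (isCompl_closedNucleus_openNucleus a₂).disjoint.mono
    (inf_le_left.trans (closedNucleus_mono h)) inf_le_right

lemma closedNucleus_apply_inf_openNucleus_le (n : Nucleus X) (a : X) :
    closedNucleus (n a) ⊓ openNucleus a ≤ n := fun y =>
  calc (n a ⊔ y) ⊓ (a ⇨ y) = n a ⊓ (a ⇨ y) ⊔ y ⊓ (a ⇨ y) := inf_sup_right _ _ _
    _ ≤ n a ⊓ n (a ⇨ y) ⊔ n y :=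
      sup_le_sup (inf_le_inf_left _ Nucleus.le_apply) (inf_le_left.trans Nucleus.le_apply)
    _ ≤ n y := by
      rw [← Nucleus.map_inf, inf_himp]
      exact sup_le (n.monotone inf_le_right) le_rfl

lemma le_apply_of_closedNucleus_inf_openNucleus_le {n : Nucleus X} {a b x : X}
    (h : closedNucleus b ⊓ openNucleus a ≤ n) (ha : a ≤ n x) : b ≤ n x :=
  calc b ≤ (b ⊔ n x) ⊓ (a ⇨ n x) := le_inf le_sup_left (le_himp_iff.2 (inf_le_right.trans ha))
    _ ≤ n (n x) := h (n x)
    _ = n x := n.idempotent x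

theorem Nucleus.sSup_range_closedNucleus_inf_openNucleus (j : Nucleus X) :
    sSup (range fun a => closedNucleus (j a) ⊓ openNucleus a) = j := by
  refine isLUB_iff_sSup_eq.1 ⟨?_, fun n hn x => ?_⟩
  · rintro _ ⟨a, rfl⟩
    exact closedNucleus_apply_inf_openNucleus_le j a
  · exact le_apply_of_closedNucleus_inf_openNucleus_le (hn ⟨x, rfl⟩) Nucleus.le_apply

end ClosedOpen

section CommonFixedPoint

variable {X : Type*} [Order.Frame X]

def Sublocale.himpRange (a : X) : Sublocale X where
  carrier := range (· ⇨ a)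
  sInf_mem' s hs := by
    obtain ⟨T, rfl⟩ := subset_range_iff_exists_image_eq.1 hs
    exact ⟨sSup T, by simp only [sSup_eq_iSup', iSup_himp_eq, sInf_image']⟩
  himp_mem' b _ := by
    rintro ⟨y, rfl⟩
    exact ⟨b ⊓ y, (himp_himp b y a).symm⟩

lemma Sublocale.toNucleus_himpRange_apply_self (a : X) : (himpRange a).toNucleus a = a := by
  have : a ∈ himpRange a := ⟨⊤, top_himp⟩
  simp [restrict_of_mem this]

lemma Nucleus.le_toNucleus_himpRange {n : Nucleus X} {a : X} (h : n a = a) :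
    n ≤ (Sublocale.himpRange a).toNucleus := fun x => by
  obtain ⟨y, hy⟩ : (Sublocale.himpRange a).toNucleus x ∈ Sublocale.himpRange a :=
    ((Sublocale.himpRange a).restrict x).2
  calc n x ≤ n ((Sublocale.himpRange a).toNucleus x) := n.monotone Nucleus.le_apply
    _ = (Sublocale.himpRange a).toNucleus x := by rw [← hy, ← h, Nucleus.map_himp_apply]

theorem Nucleus.eq_top_of_forall_apply_eq {S : Set (Nucleus X)} (hS : sSup S = ⊤) {a : X}
    (ha : ∀ s ∈ S, s a = a) : a = ⊤ := by
  have hle : sSup S ≤ (Sublocale.himpRange a).toNucleus :=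
    sSup_le fun s hs => le_toNucleus_himpRange (ha s hs)
  rw [hS, top_le_iff] at hle
  rw [← Sublocale.toNucleus_himpRange_apply_self a, hle, top_apply]

end CommonFixedPoint

section TransfiniteIter

variable {α : Type u} [CompleteLattice α] (g : α → α)

noncomputable def transfiniteIter (o : Ordinal.{u}) : α :=
  g (⨆ i : Iio o, transfiniteIter i)
termination_by o
decreasing_by exact i.2

lemma transfiniteIter_eq (o : Ordinal.{u}) :
    transfiniteIter g o = g (⨆ i : Iio o, transfiniteIter g i) := by
  rw [transfiniteIter]

lemma transfiniteIter_le_iSup {i o : Ordinal.{u}} (h : i < o) :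
    transfiniteIter g i ≤ ⨆ j : Iio o, transfiniteIter g j :=
  le_iSup (fun j : Iio o => transfiniteIter g j) ⟨i, h⟩

/-- There are more ordinals than elements of `α`, so the iteration repeats a value. -/
theorem exists_isFixedPt_iSup_transfiniteIter (hg : ∀ x, x ≤ g x) :
    ∃ o : Ordinal.{u}, Function.IsFixedPt g (⨆ i : Iio o, transfiniteIter g i) := by
  obtain ⟨i, j, hij, hne⟩ := Function.not_injective_iff.1 fun hinj =>
    not_small_ordinal.{u, u} (small_of_injective (f := transfiniteIter g) hinj)
  wlog hlt : i < j generalizing i j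
  · exact this j i hij.symm hne.symm (hne.lt_or_gt.resolve_left hlt)
  refine ⟨j, le_antisymm ?_ (hg _)⟩
  calc g (⨆ k : Iio j, transfiniteIter g k) = transfiniteIter g i := by
        rw [hij, transfiniteIter_eq]
    _ ≤ ⨆ k : Iio j, transfiniteIter g k := transfiniteIter_le_iSup g hlt

end TransfiniteIter

theorem Nucleus.exists_pairwiseDisjoint_refinement {X : Type u} [Order.Frame X]
    {S : Set (Nucleus X)} (hS : sSup S = ⊤) :
    ∃ T : Set (Nucleus X), (∀ t ∈ T, ∃ s ∈ S, t ≤ s) ∧ T.PairwiseDisjoint id ∧ sSup T = ⊤ := by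
  rcases S.eq_empty_or_nonempty with rfl | ⟨s₀, hs₀⟩
  · exact ⟨∅, by simp, by simp, hS⟩
  have hmove : ∀ x : X, ∃ s ∈ S, s x = x → x = ⊤ := by
    intro x
    by_cases h : ∀ s ∈ S, s x = x
    · exact ⟨s₀, hs₀, fun _ => eq_top_of_forall_apply_eq hS h⟩
    · push Not at h
      obtain ⟨s, hs, hsx⟩ := h
      exact ⟨s, hs, fun h => absurd h hsx⟩
  choose σ hσS hσ using hmove
  let a := transfiniteIter fun x => σ x x
  have ha_eq : ∀ o, a o = σ (⨆ i : Iio o, a i) (⨆ i : Iio o, a i) := transfiniteIter_eq _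
  let t := fun o => closedNucleus (a o) ⊓ openNucleus (⨆ i : Iio o, a i)
  refine ⟨range t, ?_, ?_, ?_⟩
  · rintro _ ⟨o, rfl⟩
    refine ⟨_, hσS (⨆ i : Iio o, a i), ?_⟩
    rw [show t o = _ ⊓ _ from rfl, ha_eq o]
    exact closedNucleus_apply_inf_openNucleus_le _ _
  · refine Pairwise.range_pairwise fun i o hne => ?_
    rcases hne.lt_or_gt with h | h
    · exact disjoint_closedNucleus_inf_openNucleus (transfiniteIter_le_iSup _ h)
    · exact (disjoint_closedNucleus_inf_openNucleus (transfiniteIter_le_iSup _ h)).symm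
  · refine top_unique fun x => ?_
    have hle : ∀ o, a o ≤ sSup (range t) x := by
      intro o
      induction o using WellFoundedLT.induction with
      | _ o ih =>
        exact le_apply_of_closedNucleus_inf_openNucleus_le (le_sSup ⟨o, rfl⟩)
          (iSup_le fun i => ih i i.2)
    obtain ⟨θ, hθ⟩ := exists_isFixedPt_iSup_transfiniteIter _ fun y =>
      (Nucleus.le_apply : y ≤ σ y y)
    calc (⊤ : Nucleus X) x = ⨆ i : Iio θ, a i := (hσ _ hθ).symm
      _ ≤ sSup (range t) x := iSup_le fun i => hle i

def nucOrderIsoNucleus (A : Type u) [Order.Frame A] : Nuc A ≃o Nucleus A where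
  toFun j := ⟨⟨j.1, j.2.1⟩, fun x => (j.2.2.2 x).le, j.2.2.1⟩
  invFun n := ⟨n, fun _ _ => n.map_inf, fun _ => n.le_apply, n.idempotent⟩
  left_inv _ := rfl
  right_inv _ := rfl
  map_rel_iff' := Iff.rfl

section Transfer

variable {A : Type u} [Order.Frame A]

lemma nucOrderIsoNucleus_idNuc : nucOrderIsoNucleus A (idNuc A) = ⊥ := rfl

lemma nucOrderIsoNucleus_topNuc : nucOrderIsoNucleus A (topNuc A) = ⊤ := rfl

lemma isLUB_iff_sSup_image_nucOrderIsoNucleus {S : Set (Nuc A)} {j : Nuc A} :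
    IsLUB S j ↔ sSup (nucOrderIsoNucleus A '' S) = nucOrderIsoNucleus A j := by
  rw [← (nucOrderIsoNucleus A).isLUB_image', isLUB_iff_sSup_eq]

lemma isGLB_pair_idNuc_iff {k k' : Nuc A} :
    IsGLB {k, k'} (idNuc A) ↔ Disjoint (nucOrderIsoNucleus A k) (nucOrderIsoNucleus A k') := by
  rw [← (nucOrderIsoNucleus A).isGLB_image', image_pair, isGLB_iff_sInf_eq, sInf_pair,
    nucOrderIsoNucleus_idNuc, disjoint_iff]

lemma isLUB_pair_topNuc_iff {k k' : Nuc A} :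
    IsLUB {k, k'} (topNuc A) ↔ Codisjoint (nucOrderIsoNucleus A k) (nucOrderIsoNucleus A k') := by
  rw [← (nucOrderIsoNucleus A).isLUB_image', image_pair, isLUB_iff_sSup_eq, sSup_pair,
    nucOrderIsoNucleus_topNuc, codisjoint_iff]

lemma nucComplemented_iff {k : Nuc A} :
    NucComplemented k ↔ IsComplemented (nucOrderIsoNucleus A k) := by
  simp only [NucComplemented, isGLB_pair_idNuc_iff, isLUB_pair_topNuc_iff, IsComplemented,
    isCompl_iff, (nucOrderIsoNucleus A).surjective.exists]

end Transfer

/-- The frame of all nuclei on a frame `A` is zero-dimensional (every nucleus is a supremum of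
complemented nuclei) and ultraparacompact (every set of nuclei with supremum the top nucleus
refines to a pairwise disjoint such set). -/
theorem stmt_3 {A : Type u} [Order.Frame A] :
    (∀ j : Nuc A, ∃ S : Set (Nuc A), (∀ k ∈ S, NucComplemented k) ∧ IsLUB S j) ∧
    ∀ S : Set (Nuc A), IsLUB S (topNuc A) →
      ∃ T : Set (Nuc A), (∀ t ∈ T, ∃ s ∈ S, t ≤ s) ∧
        (∀ t₁ ∈ T, ∀ t₂ ∈ T, t₁ ≠ t₂ → IsGLB {t₁, t₂} (idNuc A)) ∧
        IsLUB T (topNuc A) := by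
  set e := nucOrderIsoNucleus A
  refine ⟨fun j => ?_, fun S hS => ?_⟩
  · refine ⟨e ⁻¹' range fun a => closedNucleus (e j a) ⊓ openNucleus a, ?_, ?_⟩
    · rintro k ⟨a, ha⟩
      exact nucComplemented_iff.2 (ha ▸ isComplemented_closedNucleus_inf_openNucleus _ _)
    · rw [isLUB_iff_sSup_image_nucOrderIsoNucleus, e.image_preimage,
        Nucleus.sSup_range_closedNucleus_inf_openNucleus]
  · rw [isLUB_iff_sSup_image_nucOrderIsoNucleus, nucOrderIsoNucleus_topNuc] at hS
    obtain ⟨T, hTS, hTdisj, hT⟩ := Nucleus.exists_pairwiseDisjoint_refinement hS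
    refine ⟨e ⁻¹' T, fun t ht => ?_, fun t₁ h₁ t₂ h₂ hne => ?_, ?_⟩
    · obtain ⟨_, ⟨s, hs, rfl⟩, hts⟩ := hTS _ ht
      exact ⟨s, hs, e.le_iff_le.1 hts⟩
    · exact isGLB_pair_idNuc_iff.2 (hTdisj h₁ h₂ (e.injective.ne hne))
    · rw [isLUB_iff_sSup_image_nucOrderIsoNucleus, e.image_preimage, nucOrderIsoNucleus_topNuc, hT]
end

section
/- Let A be a frame. Call a binary relation R on A an order-congruence if: (1) a ≤ b implies R a b; (2) R is transitive; (3) R a b implies R (c ⊓ a) (c ⊓ b) for every c; and (4) for every subset S ⊆ A and b ∈ A, if R a b for all a ∈ S then R (sSup S) b. Then the map sending a nucleus j on A to the relation R_j, defined by R_j a b iff a ≤ j(b), is a bijection from the nuclei on A onto the order-congruences on A, with inverse sending R to the nucleus b ↦ sSup {a | R a b}; moreover j ≤ j' pointwise if and only if R_j ⊆ R_{j'}. -/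
universe u

/-- An order-congruence on a frame `A`: a relation containing `≤`, transitive, stable under
binary meets, and such that suprema in `A` are still suprema with respect to it. -/
def IsOrderCongruence {A : Type u} [Order.Frame A] (R : A → A → Prop) : Prop :=
  (∀ a b : A, a ≤ b → R a b) ∧
  (∀ a b c : A, R a b → R b c → R a c) ∧
  (∀ a b c : A, R a b → R (c ⊓ a) (c ⊓ b)) ∧
  (∀ (S : Set A) (b : A), (∀ a ∈ S, R a b) → R (sSup S) b)

/-!
A nucleus `j` is recovered from `R_j` because `j b` is the largest `a` with `a ≤ j b`.
Conversely, for an order-congruence `R` the supremum condition makes `j_R b = sSup {a | R a b}`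
itself `R`-related to `b`, so `R a b ↔ a ≤ j_R b`; transitivity of `R` then gives idempotence
of `j_R`, and meet-stability gives `j_R a ⊓ j_R b ≤ j_R (a ⊓ b)`.
No distributivity is needed: the correspondence holds in any complete lattice.
-/

namespace IsNucleus

variable {A : Type u} [Order.Frame A] {j : A → A}

theorem monotone (hj : IsNucleus j) : Monotone j := fun a b hab => by
  simpa only [inf_eq_left.2 hab, left_eq_inf] using hj.1 a b

theorem le_apply_trans (hj : IsNucleus j) {a b c : A} (hab : a ≤ j b) (hbc : b ≤ j c) :
    a ≤ j c :=
  calc a ≤ j b := hab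
    _ ≤ j (j c) := hj.monotone hbc
    _ = j c := hj.2.2 c

theorem isOrderCongruence (hj : IsNucleus j) : IsOrderCongruence fun a b => a ≤ j b :=
  ⟨fun _ b hab => hab.trans (hj.2.1 b), fun _ _ _ => hj.le_apply_trans,
    fun _ b c hab => (inf_le_inf (hj.2.1 c) hab).trans (hj.1 c b).ge, fun _ _ => sSup_le⟩

end IsNucleus

namespace IsOrderCongruence

variable {A : Type u} [Order.Frame A] {R : A → A → Prop}

theorem rel_of_eq (hR : IsOrderCongruence R) {a b : A} (h : a = b) : R a b :=
  hR.1 a b h.le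

theorem rel_sSup (hR : IsOrderCongruence R) (b : A) : R (sSup {a | R a b}) b :=
  hR.2.2.2 _ b fun _ ha => ha

theorem rel_iff_le_sSup (hR : IsOrderCongruence R) {a b : A} :
    R a b ↔ a ≤ sSup {a' | R a' b} :=
  ⟨fun h => le_sSup h, fun h => hR.2.1 _ _ _ (hR.1 _ _ h) (hR.rel_sSup b)⟩

theorem rel_inf (hR : IsOrderCongruence R) {a b a' b' : A} (h : R a b) (h' : R a' b') :
    R (a ⊓ a') (b ⊓ b') := by
  have hleft : R (a ⊓ a') (a ⊓ b') := hR.2.2.1 _ _ a h'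
  have hright : R (b' ⊓ a) (b' ⊓ b) := hR.2.2.1 _ _ b' h
  have hcomm : ∀ x y : A, R (x ⊓ y) (y ⊓ x) := fun x y => hR.rel_of_eq (inf_comm x y)
  exact hR.2.1 _ _ _ hleft <| hR.2.1 _ _ _ (hcomm a b') <| hR.2.1 _ _ _ hright (hcomm b' b)

theorem monotone_sSup (hR : IsOrderCongruence R) : Monotone fun b => sSup {a | R a b} :=
  fun _ _ hbc => sSup_le_sSup fun _ ha => hR.2.1 _ _ _ ha (hR.1 _ _ hbc)

theorem isNucleus (hR : IsOrderCongruence R) : IsNucleus fun b => sSup {a | R a b} := by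
  refine ⟨fun a b => le_antisymm ?_ ?_, fun a => le_sSup (hR.1 a a le_rfl), fun b => ?_⟩
  · exact le_inf (hR.monotone_sSup inf_le_left) (hR.monotone_sSup inf_le_right)
  · exact le_sSup (hR.rel_inf (hR.rel_sSup a) (hR.rel_sSup b))
  · refine le_antisymm (le_sSup ?_) (le_sSup (hR.1 _ _ le_rfl))
    exact hR.2.1 _ _ _ (hR.rel_sSup _) (hR.rel_sSup b)

end IsOrderCongruence

/-- The map `j ↦ (R_j : a b ↦ a ≤ j b)` is a bijection from the nuclei on a frame `A` onto the
order-congruences on `A`, with inverse `R ↦ (b ↦ sSup {a | R a b})`; moreover `j ≤ j'` pointwise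
iff `R_j ⊆ R_{j'}`. -/
theorem stmt_4 {A : Type u} [Order.Frame A] :
    (∀ j : A → A, IsNucleus j → IsOrderCongruence fun a b => a ≤ j b) ∧
    (∀ R : A → A → Prop, IsOrderCongruence R → IsNucleus fun b => sSup {a | R a b}) ∧
    (∀ j : A → A, IsNucleus j → (fun b => sSup {a | a ≤ j b}) = j) ∧
    (∀ R : A → A → Prop, IsOrderCongruence R →
      ∀ a b : A, R a b ↔ a ≤ sSup {a' | R a' b}) ∧
    (∀ j j' : A → A, IsNucleus j → IsNucleus j' →
      ((∀ a : A, j a ≤ j' a) ↔ ∀ a b : A, a ≤ j b → a ≤ j' b)) :=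
  ⟨fun _ hj => hj.isOrderCongruence,
    fun _ hR => hR.isNucleus,
    fun _ _ => funext fun _ => csSup_Iic,
    fun _ hR _ _ => hR.rel_iff_le_sSup,
    fun j _ _ _ => (forall_congr' fun b => (forall_le_iff_le (a := j b)).symm).trans forall_comm⟩
end

section
/- Let A, B, C, D be Boolean algebras and f : A → B, g : A → C, i₁ : B → D, i₂ : C → D Boolean algebra homomorphisms with i₁ ∘ f = i₂ ∘ g, and suppose the square is a pushout: for every Boolean algebra E and homomorphisms j₁ : B → E, j₂ : C → E with j₁ ∘ f = j₂ ∘ g there is a unique homomorphism h : D → E with h ∘ i₁ = j₁ and h ∘ i₂ = j₂. Then for all b ∈ B and c ∈ C with i₁(b) ≤ i₂(c), there exists a ∈ A with b ≤ f(a) and g(a) ≤ c. -/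
/-!
Suppose `b` and `c` admit no interpolant. Two applications of the prime ideal theorem give prime
ideals `J ∌ b` of `B` and `K ∋ c` of `C` that pull back to the same prime ideal of `A`: first
separate `b` from the ideal generated by `f '' (g ⁻¹' ↓c)`, then separate `c` from the filter
generated by `g '' (f ⁻¹' Jᶜ)`. The two characters `x ↦ x ∉ J` and `y ↦ y ∉ K` then form a
cocone over the square, so they factor through `D`; monotonicity of the factorization turns
`i₁ b ≤ i₂ c` into `b ∉ J → c ∉ K`, which is false.
-/

universe u

open Order

namespace Order.Ideal.IsPrime

variable {P : Type*} [Lattice P] [BoundedOrder P] {J : Ideal P}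

def notMemHom (hJ : J.IsPrime) : BoundedLatticeHom P Prop where
  toFun x := x ∉ J
  map_sup' _ _ := by
    simp only [sup_Prop_eq, sup_mem_iff, not_and_or]
  map_inf' _ _ := by
    simp only [inf_Prop_eq, eq_iff_iff]
    refine ⟨fun h => ⟨fun hx => h (J.lower inf_le_left hx), fun hy => h (J.lower inf_le_right hy)⟩,
      fun ⟨hx, hy⟩ hxy => (hJ.mem_or_mem hxy).elim hx hy⟩
  map_top' := eq_true hJ.top_notMem
  map_bot' := eq_false (not_not_intro J.bot_mem)

end Order.Ideal.IsPrime

def Pi.constBoundedLatticeHom (ι α : Type*) [Lattice α] [BoundedOrder α] :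
    BoundedLatticeHom α (ι → α) where
  toFun := Function.const ι
  map_sup' _ _ := rfl
  map_inf' _ _ := rfl
  map_top' := rfl
  map_bot' := rfl

section PrimeSeparation

variable {A B C : Type*} [Lattice A] [BoundedOrder A] [DistribLattice B] [BoundedOrder B]
  [DistribLattice C] [BoundedOrder C] (f : BoundedLatticeHom A B) (g : BoundedLatticeHom A C)

theorem exists_isPrime_disjoint_of_forall_mem_imp_notMem {F : PFilter B} {I : Ideal C}
    (h : ∀ a, g a ∈ I → f a ∉ F) :
    ∃ J : Ideal B, J.IsPrime ∧ Disjoint (F : Set B) J ∧ ∀ a, g a ∈ I → f a ∈ J := by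
  have hideal : IsIdeal {x : B | ∃ a, g a ∈ I ∧ x ≤ f a} := by
    refine ⟨fun x y hyx ⟨a, ha, hx⟩ => ⟨a, ha, hyx.trans hx⟩, ⟨⊥, ⊥, by simp, bot_le⟩, ?_⟩
    rintro x ⟨a₁, ha₁, hx⟩ y ⟨a₂, ha₂, hy⟩
    refine ⟨x ⊔ y, ⟨a₁ ⊔ a₂, by simpa using I.sup_mem ha₁ ha₂, ?_⟩, le_sup_left, le_sup_right⟩
    simpa using sup_le_sup hx hy
  have hdisj : Disjoint (F : Set B) hideal.toIdeal :=
    Set.disjoint_left.2 fun x hx ⟨a, ha, hxa⟩ => h a ha (F.mem_of_le hxa hx)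
  obtain ⟨J, hJ, hle, hJF⟩ := DistribLattice.prime_ideal_of_disjoint_filter_ideal hdisj
  exact ⟨J, hJ, hJF, fun a ha => hle ⟨a, ha, le_rfl⟩⟩

theorem exists_isPrime_le_of_forall_mem_imp_mem {J : Ideal B} (hJ : J.IsPrime) {I : Ideal C}
    (h : ∀ a, g a ∈ I → f a ∈ J) :
    ∃ K : Ideal C, K.IsPrime ∧ I ≤ K ∧ ∀ a, g a ∈ K → f a ∈ J := by
  have hfilter : IsPFilter {y : C | ∃ a, f a ∉ J ∧ g a ≤ y} := by
    refine .of_def ⟨⊤, ⊤, by simpa using hJ.top_notMem, le_top⟩ ?_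
      fun hyz ⟨a, ha, hy⟩ => ⟨a, ha, hy.trans hyz⟩
    rintro y₁ ⟨a₁, ha₁, hy₁⟩ y₂ ⟨a₂, ha₂, hy₂⟩
    refine ⟨y₁ ⊓ y₂, ⟨a₁ ⊓ a₂, ?_, by simpa using inf_le_inf hy₁ hy₂⟩, inf_le_left, inf_le_right⟩
    simpa using fun hmem => (hJ.mem_or_mem hmem).elim ha₁ ha₂
  have hdisj : Disjoint (hfilter.toPFilter : Set C) I :=
    Set.disjoint_left.2 fun y ⟨a, ha, hy⟩ hyI => ha (h a (I.lower hy hyI))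
  obtain ⟨K, hK, hle, hKG⟩ := DistribLattice.prime_ideal_of_disjoint_filter_ideal hdisj
  exact ⟨K, hK, hle, fun a ha => not_not.1 fun hfa =>
    Set.disjoint_left.1 hKG (⟨a, hfa, le_rfl⟩ : g a ∈ hfilter.toPFilter) ha⟩

end PrimeSeparation

/-- The pullbacks `g⁻¹ K ⊆ f⁻¹ J` are prime ideals of `A`, and prime ideals of a Boolean algebra
are maximal. -/
theorem mem_iff_mem_of_forall_mem_imp_mem {A B C : Type*} [BooleanAlgebra A] [BooleanAlgebra B]
    [BooleanAlgebra C] (f : BoundedLatticeHom A B) (g : BoundedLatticeHom A C) {J : Ideal B}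
    {K : Ideal C} (hJ : J.IsPrime) (hK : K.IsPrime) (h : ∀ a, g a ∈ K → f a ∈ J) (a : A) :
    f a ∈ J ↔ g a ∈ K := by
  refine ⟨fun hfa => ?_, h a⟩
  have hfa' : f aᶜ ∉ J := fun hc => hJ.top_notMem (by simpa using J.sup_mem hfa hc)
  have hga' : (g a)ᶜ ∉ K := by simpa using mt (h aᶜ) hfa'
  exact hK.mem_or_compl_mem.resolve_right hga'

theorem stmt_5_general {A B C D : Type u} [BooleanAlgebra A] [BooleanAlgebra B] [BooleanAlgebra C]
    [BooleanAlgebra D] (f : BoundedLatticeHom A B) (g : BoundedLatticeHom A C)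
    (i₁ : BoundedLatticeHom B D) (i₂ : BoundedLatticeHom C D)
    (hpushout : ∀ (E : Type u) [BooleanAlgebra E] (j₁ : BoundedLatticeHom B E)
      (j₂ : BoundedLatticeHom C E), j₁.comp f = j₂.comp g →
        ∃! h : BoundedLatticeHom D E, h.comp i₁ = j₁ ∧ h.comp i₂ = j₂)
    (b : B) (c : C) (hbc : i₁ b ≤ i₂ c) :
    ∃ a : A, b ≤ f a ∧ g a ≤ c := by
  by_contra! hno
  obtain ⟨J, hJ, hbJ, hJc⟩ := exists_isPrime_disjoint_of_forall_mem_imp_notMem f g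
    (F := PFilter.principal b) (I := Ideal.principal c) fun a hc hb => hno a hb hc
  obtain ⟨K, hK, hcK, hKJ⟩ := exists_isPrime_le_of_forall_mem_imp_mem f g hJ hJc
  -- `Prop` is not in `Type u`, so test against its copy `ι → Prop`.
  let ι := PUnit.{u + 1}
  let j₁ := (Pi.constBoundedLatticeHom ι Prop).comp hJ.notMemHom
  let j₂ := (Pi.constBoundedLatticeHom ι Prop).comp hK.notMemHom
  have hcocone : j₁.comp f = j₂.comp g := by
    ext a
    exact not_congr (mem_iff_mem_of_forall_mem_imp_mem f g hJ hK hKJ a)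
  obtain ⟨h, ⟨h₁, h₂⟩, -⟩ := hpushout (ι → Prop) j₁ j₂ hcocone
  have hle : j₁ b ≤ j₂ c := by
    rw [← h₁, ← h₂]
    exact OrderHomClass.mono h hbc
  exact hle PUnit.unit (Set.disjoint_left.1 hbJ le_rfl) (hcK Ideal.mem_principal_self)

/-- **Interpolation for pushouts of Boolean algebras** (LaGrange). Given a pushout square of
Boolean algebra homomorphisms `i₁ ∘ f = i₂ ∘ g`, if `i₁ b ≤ i₂ c` then there is `a` with
`b ≤ f a` and `g a ≤ c`. -/
theorem stmt_5 {A B C D : Type u} [BooleanAlgebra A] [BooleanAlgebra B] [BooleanAlgebra C]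
    [BooleanAlgebra D] (f : BoundedLatticeHom A B) (g : BoundedLatticeHom A C)
    (i₁ : BoundedLatticeHom B D) (i₂ : BoundedLatticeHom C D)
    (hcomm : i₁.comp f = i₂.comp g)
    (hpushout : ∀ (E : Type u) [BooleanAlgebra E] (j₁ : BoundedLatticeHom B E)
      (j₂ : BoundedLatticeHom C E), j₁.comp f = j₂.comp g →
        ∃! h : BoundedLatticeHom D E, h.comp i₁ = j₁ ∧ h.comp i₂ = j₂)
    (b : B) (c : C) (hbc : i₁ b ≤ i₂ c) :
    ∃ a : A, b ≤ f a ∧ g a ≤ c :=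
  stmt_5_general f g i₁ i₂ hpushout b c hbc
end

section
/- Every epimorphism in the category of Boolean algebras is surjective: if f : A → B is a Boolean algebra homomorphism such that for every Boolean algebra C and all Boolean algebra homomorphisms g, h : B → C, g ∘ f = h ∘ f implies g = h, then f is surjective. -/
/-!
Let `L = f(A)`, a Boolean subalgebra of `B`, and suppose `b ∉ L`. Since `bᶜ ∉ L`, no element of
`L` below `bᶜ` lies above `bᶜ`, so some prime ideal `Q ∋ b` contains all of them. Then no element
`r ∈ L ∩ Q` lies above `b` (else `rᶜ ≤ bᶜ` would put `⊤ = r ⊔ rᶜ` into `Q`), so some prime ideal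
`P ∋ bᶜ` contains `L ∩ Q`; as `L ∩ Q` is a maximal ideal of `L`, `P` and `Q` have the same trace
on `L`. The two homomorphisms to the two-element algebra with kernels `P` and `Q` agree on `f(A)`
but not at `b`.
-/

universe u

open Order Ideal

namespace BooleanSubalgebra

variable {B : Type*} [BooleanAlgebra B] {L : BooleanSubalgebra B}

def traceIdeal (L : BooleanSubalgebra B) (I : Ideal B) : Ideal B where
  carrier := {y | ∃ r ∈ L, r ∈ I ∧ y ≤ r}
  lower' _ _ hyz := fun ⟨r, hrL, hrI, hzr⟩ => ⟨r, hrL, hrI, hyz.trans hzr⟩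
  nonempty' := ⟨⊥, ⊥, L.bot_mem, I.bot_mem, le_rfl⟩
  directed' _ := fun ⟨r, hrL, hrI, hyr⟩ _ ⟨s, hsL, hsI, hzs⟩ =>
    ⟨r ⊔ s, ⟨r ⊔ s, L.sup_mem hrL hsL, I.sup_mem hrI hsI, le_rfl⟩,
      hyr.trans le_sup_left, hzs.trans le_sup_right⟩

lemma mem_traceIdeal_of_mem {I : Ideal B} {y : B} (hyL : y ∈ L) (hyI : y ∈ I) :
    y ∈ L.traceIdeal I :=
  ⟨y, hyL, hyI, le_rfl⟩

lemma mem_iff_mem_of_traceIdeal_le {P Q : Ideal B} (hP : P.IsProper) (hQ : Q.IsPrime)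
    (hQP : L.traceIdeal Q ≤ P) {r : B} (hr : r ∈ L) : r ∈ P ↔ r ∈ Q := by
  refine ⟨fun hrP => ?_, fun hrQ => hQP (mem_traceIdeal_of_mem hr hrQ)⟩
  by_contra hrQ
  have hrcQ : rᶜ ∈ Q := hQ.compl_mem_of_notMem hrQ
  exact hP.notMem_of_compl_mem (hQP (mem_traceIdeal_of_mem (L.compl_mem hr) hrcQ)) hrP

end BooleanSubalgebra

namespace Order.Ideal

variable {B : Type*} [BooleanAlgebra B]

lemma exists_isPrime_le_and_mem {I : Ideal B} {c : B} (hc : cᶜ ∉ I) :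
    ∃ P : Ideal B, P.IsPrime ∧ I ≤ P ∧ c ∈ P := by
  have hproper : (I ⊔ principal c).IsProper := by
    refine isProper_iff_top_notMem.2 fun htop => hc ?_
    obtain ⟨i, hi, htop_le⟩ := (Lattice.mem_ideal_sup_principal c ⊤ I).1 htop
    exact I.lower (codisjoint_iff_compl_le_left.1 (codisjoint_iff_le_sup.2 htop_le)) hi
  obtain ⟨P, hle, hP⟩ := hproper.exists_le_maximal
  exact ⟨P, hP.isPrime, le_sup_left.trans hle, hle (le_sup_right (a := I) mem_principal_self)⟩

lemma IsPrime.inf_mem_iff {J : Ideal B} (hJ : J.IsPrime) {x y : B} :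
    x ⊓ y ∈ J ↔ x ∈ J ∨ y ∈ J :=
  ⟨hJ.mem_or_mem, fun h => h.elim (J.lower inf_le_left) (J.lower inf_le_right)⟩

/-- `Set PUnit` serves as the two-element Boolean algebra in universe `u`. -/
def IsPrime.toSetPUnitHom {J : Ideal B} (hJ : J.IsPrime) :
    BoundedLatticeHom B (Set PUnit.{u+1}) where
  toFun x := {_p | x ∉ J}
  map_sup' _ _ := Set.ext fun _ => sup_mem_iff.not.trans not_and_or
  map_inf' _ _ := Set.ext fun _ => hJ.inf_mem_iff.not.trans not_or
  map_top' := Set.ext fun _ => iff_true_intro hJ.top_notMem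
  map_bot' := Set.ext fun _ => iff_false_intro (not_not_intro J.bot_mem)

end Order.Ideal

lemma BooleanSubalgebra.exists_isPrime_separating {B : Type*} [BooleanAlgebra B]
    {L : BooleanSubalgebra B} {b : B} (hb : b ∉ L) :
    ∃ P Q : Ideal B, P.IsPrime ∧ Q.IsPrime ∧ (∀ r ∈ L, r ∈ P ↔ r ∈ Q) ∧ b ∉ P ∧ b ∈ Q := by
  obtain ⟨Q, hQ, hQle, hbQ⟩ :
      ∃ Q : Ideal B, Q.IsPrime ∧ L.traceIdeal (principal bᶜ) ≤ Q ∧ b ∈ Q := by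
    refine exists_isPrime_le_and_mem fun ⟨r, hrL, hrb, hbr⟩ => hb ?_
    rw [← compl_compl b, ← le_antisymm (mem_principal.1 hrb) hbr]
    exact L.compl_mem hrL
  obtain ⟨P, hP, hPle, hbP⟩ : ∃ P : Ideal B, P.IsPrime ∧ L.traceIdeal Q ≤ P ∧ bᶜ ∈ P := by
    refine exists_isPrime_le_and_mem fun ⟨r, hrL, hrQ, hbr⟩ => hQ.top_notMem ?_
    have hrb : rᶜ ≤ bᶜ := compl_le_compl (by simpa using hbr)
    have hrcQ : rᶜ ∈ Q := hQle ⟨rᶜ, L.compl_mem hrL, mem_principal.2 hrb, le_rfl⟩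
    simpa using Q.sup_mem hrQ hrcQ
  exact ⟨P, Q, hP, hQ, fun r hr => L.mem_iff_mem_of_traceIdeal_le hP.toIsProper hQ hPle hr,
    hP.toIsProper.notMem_of_compl_mem hbP, hbQ⟩

/-- Every epimorphism in the category of Boolean algebras is surjective. -/
theorem stmt_6 {A B : Type u} [BooleanAlgebra A] [BooleanAlgebra B]
    (f : BoundedLatticeHom A B)
    (hepi : ∀ (C : Type u) [BooleanAlgebra C] (g h : BoundedLatticeHom B C),
      g.comp f = h.comp f → g = h) :
    Function.Surjective ⇑f := by
  intro b
  by_contra hb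
  obtain ⟨P, Q, hP, hQ, hPQ, hbP, hbQ⟩ :=
    BooleanSubalgebra.exists_isPrime_separating (L := (⊤ : BooleanSubalgebra A).map f)
      (by simpa using hb)
  have hPQ_hom : hP.toSetPUnitHom = hQ.toSetPUnitHom :=
    hepi _ _ _ <| BoundedLatticeHom.ext fun a =>
      Set.ext fun _ => (hPQ (f a) ⟨a, trivial, rfl⟩).not
  exact (congrArg (PUnit.unit ∈ · b) hPQ_hom).mp hbP hbQ
end

section
/- The category of Boolean algebras has the strong amalgamation property: given injective Boolean algebra homomorphisms f : A → B and g : A → C, there exist a Boolean algebra D and injective Boolean algebra homomorphisms g' : B → D and f' : C → D with g' ∘ f = f' ∘ g, such that moreover whenever g'(b) = f'(c) for b ∈ B and c ∈ C, there is a ∈ A with f(a) = b and g(a) = c. -/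
/-!
Points of a bounded distributive lattice `α` are bounded lattice homomorphisms `α → Prop`; by the
prime ideal theorem they separate elements, and a point of `α` extends along `h : α → β` to a point
of `β` taking prescribed values at two elements as soon as no inequality of `β` forbids it.
The amalgam `D` is the powerset of the pullback of the point sets of `B` and `C` over that of `A`
(the Stone dual of the pushout), with `b ↦ {(p, q) | p b}` and `c ↦ {(p, q) | q c}`. Both maps are
injective because every point of `B` or `C` occurs in the pullback. For strong amalgamation, if `b`
is not in the range of `f`, one finds two points of `B` agreeing on `f(A)` but differing at `b`;
completing their common restriction to a point of `C` shows that `b` cannot correspond to any `c`.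
-/

universe u

open Order

variable {α β : Type*}

def Order.Ideal.IsPrime.toBoundedLatticeHom [Lattice α] [BoundedOrder α] {J : Ideal α}
    (hJ : J.IsPrime) : BoundedLatticeHom α Prop where
  toFun x := x ∉ J
  map_sup' _ _ := by simp only [Ideal.sup_mem_iff, not_and_or]; rfl
  map_inf' x y := by
    refine propext ⟨fun h => ⟨fun hx => h (J.lower inf_le_left hx),
      fun hy => h (J.lower inf_le_right hy)⟩, fun ⟨hx, hy⟩ h => ?_⟩
    exact (hJ.mem_or_mem h).elim hx hy
  map_top' := propext ⟨fun _ => trivial, fun _ => hJ.top_notMem⟩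
  map_bot' := propext ⟨fun h => h J.bot_mem, False.elim⟩

section DistribLattice

variable [DistribLattice α] [BoundedOrder α] [DistribLattice β] [BoundedOrder β]

theorem exists_boundedLatticeHom_prop_of_disjoint {F I : Set α} (hF : IsPFilter F)
    (hI : IsIdeal I) (hFI : Disjoint F I) :
    ∃ p : BoundedLatticeHom α Prop, (∀ x ∈ F, p x) ∧ ∀ x ∈ I, ¬ p x := by
  obtain ⟨J, hJ, hIJ, hFJ⟩ :=
    DistribLattice.prime_ideal_of_disjoint_filter_ideal (F := hF.toPFilter) (I := hI.toIdeal) hFI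
  exact ⟨hJ.toBoundedLatticeHom, fun x hx hxJ => Set.disjoint_left.1 hFJ hx hxJ,
    fun x hx hxJ => hxJ (hIJ hx)⟩

theorem le_of_forall_boundedLatticeHom_prop {x y : α}
    (h : ∀ p : BoundedLatticeHom α Prop, p x → p y) : x ≤ y := by
  by_contra hxy
  obtain ⟨p, hpx, hpy⟩ := exists_boundedLatticeHom_prop_of_disjoint
    (PFilter.principal x).isPFilter (Ideal.principal y).isIdeal
    (Set.disjoint_left.2 fun z hxz hzy =>
      hxy ((PFilter.mem_principal.1 hxz).trans (Ideal.mem_principal.1 hzy)))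
  exact hpy y (Ideal.mem_principal.2 le_rfl) (h p (hpx x (PFilter.mem_principal.2 le_rfl)))

theorem eq_of_forall_boundedLatticeHom_prop {x y : α}
    (h : ∀ p : BoundedLatticeHom α Prop, p x ↔ p y) : x = y :=
  le_antisymm (le_of_forall_boundedLatticeHom_prop fun p => (h p).1)
    (le_of_forall_boundedLatticeHom_prop fun p => (h p).2)

theorem exists_boundedLatticeHom_prop_comp_eq (h : BoundedLatticeHom α β)
    (p : BoundedLatticeHom α Prop) {b c : β}
    (hbc : ∀ a a', p a → ¬ p a' → ¬ b ⊓ h a ≤ c ⊔ h a') :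
    ∃ q : BoundedLatticeHom β Prop, q.comp h = p ∧ q b ∧ ¬ q c := by
  have hF : IsPFilter {x | ∃ a, p a ∧ b ⊓ h a ≤ x} := by
    refine IsPFilter.of_def ⟨b, ⊤, by simp⟩ ?_ fun hxy ⟨a, ha, hx⟩ => ⟨a, ha, hx.trans hxy⟩
    rintro x ⟨a₁, ha₁, hx⟩ y ⟨a₂, ha₂, hy⟩
    refine ⟨x ⊓ y, ⟨a₁ ⊓ a₂, by simp [ha₁, ha₂], ?_⟩, inf_le_left, inf_le_right⟩
    rw [map_inf]
    exact le_inf ((inf_le_inf_left b inf_le_left).trans hx)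
      ((inf_le_inf_left b inf_le_right).trans hy)
  have hI : IsIdeal {x | ∃ a, ¬ p a ∧ x ≤ c ⊔ h a} := by
    refine ⟨fun x y hyx ⟨a, ha, hx⟩ => ⟨a, ha, hyx.trans hx⟩, ⟨⊥, ⊥, by simp⟩, ?_⟩
    rintro x ⟨a₁, ha₁, hx⟩ y ⟨a₂, ha₂, hy⟩
    refine ⟨x ⊔ y, ⟨a₁ ⊔ a₂, by simp [ha₁, ha₂], ?_⟩, le_sup_left, le_sup_right⟩
    rw [map_sup]
    exact sup_le (hx.trans (sup_le_sup_left le_sup_left c))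
      (hy.trans (sup_le_sup_left le_sup_right c))
  obtain ⟨q, hqF, hqI⟩ := exists_boundedLatticeHom_prop_of_disjoint hF hI <|
    Set.disjoint_left.2 fun x ⟨a, ha, hx⟩ ⟨a', ha', hx'⟩ => hbc a a' ha ha' (hx.trans hx')
  refine ⟨q, BoundedLatticeHom.ext fun a => propext ⟨fun hqa => ?_, fun hpa => ?_⟩,
    hqF b ⟨⊤, by simp⟩, hqI c ⟨⊥, by simp⟩⟩
  · by_contra hpa
    exact hqI (h a) ⟨a, hpa, le_sup_right⟩ hqa
  · exact hqF (h a) ⟨a, hpa, inf_le_right⟩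

theorem exists_boundedLatticeHom_prop_comp_eq_of_injective {h : BoundedLatticeHom α β}
    (hh : Function.Injective h) (p : BoundedLatticeHom α Prop) :
    ∃ q : BoundedLatticeHom β Prop, q.comp h = p := by
  obtain ⟨q, hq, -⟩ := exists_boundedLatticeHom_prop_comp_eq h p (b := ⊤) (c := ⊥)
    fun a a' ha ha' hle => by
      rw [top_inf_eq, bot_sup_eq] at hle
      have haa' : a ⊓ a' = a := hh (by rw [map_inf, inf_eq_left.2 hle])
      exact ha' (OrderHomClass.mono p (inf_eq_left.1 haa') ha)
  exact ⟨q, hq⟩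

end DistribLattice

theorem exists_boundedLatticeHom_prop_of_notMem_range [BooleanAlgebra α] [BooleanAlgebra β]
    (f : BoundedLatticeHom α β) {b : β} (hb : b ∉ Set.range f) :
    ∃ q q' : BoundedLatticeHom β Prop, q.comp f = q'.comp f ∧ q b ∧ ¬ q' b := by
  have hF : IsPFilter {a | b ≤ f a} :=
    IsPFilter.of_def ⟨⊤, by simp⟩
      (fun a₁ ha₁ a₂ ha₂ => ⟨a₁ ⊓ a₂, by rw [Set.mem_ofPred_eq, map_inf]; exact le_inf ha₁ ha₂,
        inf_le_left, inf_le_right⟩)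
      fun ha₁₂ ha₁ => ha₁.trans (OrderHomClass.mono f ha₁₂)
  have hI : IsIdeal {a | f a ≤ b} :=
    ⟨fun _ _ ha₂₁ ha₁ => (OrderHomClass.mono f ha₂₁).trans ha₁, ⟨⊥, by simp⟩,
      fun a₁ ha₁ a₂ ha₂ => ⟨a₁ ⊔ a₂, by rw [Set.mem_ofPred_eq, map_sup]; exact sup_le ha₁ ha₂,
        le_sup_left, le_sup_right⟩⟩
  obtain ⟨p, hpF, hpI⟩ := exists_boundedLatticeHom_prop_of_disjoint hF hI <|
    Set.disjoint_left.2 fun a hba hab => hb ⟨a, le_antisymm hab hba⟩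
  obtain ⟨q, hq, hqb, -⟩ := exists_boundedLatticeHom_prop_comp_eq f p (b := b) (c := ⊥)
    fun a a' ha ha' hle => by
      rw [bot_sup_eq, ← le_himp_iff, himp_eq, ← map_compl', ← map_sup] at hle
      simpa [ha, ha'] using hpF _ hle
  obtain ⟨q', hq', -, hq'b⟩ := exists_boundedLatticeHom_prop_comp_eq f p (b := ⊤) (c := b)
    fun a a' ha ha' hle => by
      rw [top_inf_eq, ← sdiff_le_iff', sdiff_eq, ← map_compl', ← map_inf] at hle
      simpa [ha, ha'] using hpI _ hle
  exact ⟨q, q', hq.trans hq'.symm, hqb, hq'b⟩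

def stoneHom {X : Type*} [Lattice α] [BoundedOrder α] (π : X → BoundedLatticeHom α Prop) :
    BoundedLatticeHom α (Set X) where
  toFun a := {x | π x a}
  map_sup' _ _ := by ext; simp
  map_inf' _ _ := by ext; simp
  map_top' := by ext; simp
  map_bot' := by ext; simp

theorem stoneHom_injective {X : Type*} [DistribLattice α] [BoundedOrder α]
    {π : X → BoundedLatticeHom α Prop} (hπ : Function.Surjective π) :
    Function.Injective (stoneHom π) := fun a a' h =>
  eq_of_forall_boundedLatticeHom_prop fun p => by
    obtain ⟨x, rfl⟩ := hπ p
    exact Set.ext_iff.1 h x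

section Pullback

variable {A B C : Type u} [BooleanAlgebra A] [BooleanAlgebra B] [BooleanAlgebra C]

def PointPullback (f : BoundedLatticeHom A B) (g : BoundedLatticeHom A C) : Type u :=
  {pq : BoundedLatticeHom B Prop × BoundedLatticeHom C Prop // pq.1.comp f = pq.2.comp g}

variable {f : BoundedLatticeHom A B} {g : BoundedLatticeHom A C}

theorem PointPullback.fst_surjective (hg : Function.Injective g) :
    Function.Surjective fun s : PointPullback f g => s.1.1 := fun q => by
  obtain ⟨r, hr⟩ := exists_boundedLatticeHom_prop_comp_eq_of_injective hg (q.comp f)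
  exact ⟨⟨(q, r), hr.symm⟩, rfl⟩

theorem PointPullback.snd_surjective (hf : Function.Injective f) :
    Function.Surjective fun s : PointPullback f g => s.1.2 := fun r => by
  obtain ⟨q, hq⟩ := exists_boundedLatticeHom_prop_comp_eq_of_injective hf (r.comp g)
  exact ⟨⟨(q, r), hq⟩, rfl⟩

end Pullback

/-- The category of Boolean algebras has the strong amalgamation property. -/
theorem stmt_7 {A B C : Type u} [BooleanAlgebra A] [BooleanAlgebra B] [BooleanAlgebra C]
    (f : BoundedLatticeHom A B) (g : BoundedLatticeHom A C)
    (hf : Function.Injective ⇑f) (hg : Function.Injective ⇑g) :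
    ∃ (D : Type u) (_ : BooleanAlgebra D) (g' : BoundedLatticeHom B D)
      (f' : BoundedLatticeHom C D),
      Function.Injective ⇑g' ∧ Function.Injective ⇑f' ∧ g'.comp f = f'.comp g ∧
      ∀ (b : B) (c : C), g' b = f' c → ∃ a : A, f a = b ∧ g a = c := by
  have hcomm : (stoneHom fun s : PointPullback f g => s.1.1).comp f =
      (stoneHom fun s : PointPullback f g => s.1.2).comp g := by
    ext a s
    exact iff_of_eq (congrArg (· a) s.2)
  have hf' := stoneHom_injective (PointPullback.snd_surjective (f := f) (g := g) hf)
  refine ⟨Set (PointPullback f g), inferInstance, _, _,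
    stoneHom_injective (PointPullback.fst_surjective hg), hf', hcomm, fun b c hbc => ?_⟩
  have hbc' (s : PointPullback f g) : s.1.1 b ↔ s.1.2 c := Set.ext_iff.1 hbc s
  have hb : b ∈ Set.range f := by
    by_contra hb
    obtain ⟨q, q', hqq', hqb, hq'b⟩ := exists_boundedLatticeHom_prop_of_notMem_range f hb
    obtain ⟨r, hr⟩ := exists_boundedLatticeHom_prop_comp_eq_of_injective hg (q.comp f)
    exact hq'b ((hbc' ⟨(q', r), hqq'.symm.trans hr.symm⟩).2 ((hbc' ⟨(q, r), hr.symm⟩).1 hqb))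
  obtain ⟨a, rfl⟩ := hb
  refine ⟨a, rfl, hf' ?_⟩
  rw [← BoundedLatticeHom.comp_apply, ← hcomm, BoundedLatticeHom.comp_apply, hbc]
end

section
/- Every monomorphism in the category of Boolean algebras is regular: for every injective Boolean algebra homomorphism f : A → B there exist a Boolean algebra C and Boolean algebra homomorphisms g, h : B → C such that the range of f equals {b ∈ B | g(b) = h(b)}; in other words, f is an equalizer of a pair of homomorphisms. -/
universe u

/-! The range of `f : A → B` is the equalizer of the two evaluations from `B` into the Boolean
algebra of `Prop`-valued functions on pairs of homomorphisms `B → Prop` that agree on the range.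
Indeed, for `b` outside the range, the ideal of `A` generated by the `a` with `f a ≤ b` or
`f a ≤ bᶜ` is proper, so by the prime ideal theorem some `φ : A → Prop` vanishes on it. Such a `φ`
extends along `f`, again by the prime ideal theorem, both to a `ψ₁` with `ψ₁ b` and to a `ψ₂`
with `ψ₂ bᶜ`. -/

namespace Order.Ideal

section Functoriality

variable {A B F : Type*} [SemilatticeSup A] [OrderBot A] [SemilatticeSup B] [OrderBot B]
  [FunLike F A B] [SupBotHomClass F A B]

def comap (f : F) (I : Ideal B) : Ideal A where
  carrier := f ⁻¹' I
  lower' _ _ hxy hx := I.lower (OrderHomClass.mono f hxy) hx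
  nonempty' := ⟨⊥, by simp [I.bot_mem]⟩
  directed' x hx y hy := ⟨x ⊔ y, by simp [map_sup, I.sup_mem hx hy], le_sup_left, le_sup_right⟩

@[simp]
theorem mem_comap {f : F} {I : Ideal B} {a : A} : a ∈ comap f I ↔ f a ∈ I :=
  Iff.rfl

def map (f : F) (I : Ideal A) : Ideal B where
  carrier := {b | ∃ a ∈ I, b ≤ f a}
  lower' _ _ hxy := fun ⟨a, ha, hx⟩ => ⟨a, ha, hxy.trans hx⟩
  nonempty' := ⟨⊥, ⊥, I.bot_mem, bot_le⟩
  directed' := fun _ ⟨a₁, ha₁, hx⟩ _ ⟨a₂, ha₂, hy⟩ =>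
    ⟨f (a₁ ⊔ a₂), ⟨a₁ ⊔ a₂, I.sup_mem ha₁ ha₂, le_rfl⟩,
      hx.trans (by simp [map_sup]), hy.trans (by simp [map_sup])⟩

@[simp]
theorem mem_map {f : F} {I : Ideal A} {b : B} : b ∈ map f I ↔ ∃ a ∈ I, b ≤ f a :=
  Iff.rfl

end Functoriality

variable {B : Type*}

def IsPrime.notMemHom_s8 [Lattice B] [BoundedOrder B] {J : Ideal B} (hJ : J.IsPrime) :
    BoundedLatticeHom B Prop where
  toFun d := d ∉ J
  map_sup' d e := by simp only [sup_mem_iff, sup_Prop_eq, not_and_or]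
  map_inf' d e := by
    simp only [inf_Prop_eq, eq_iff_iff, ← not_or]
    exact not_congr ⟨hJ.mem_or_mem, fun h => h.elim (J.lower inf_le_left) (J.lower inf_le_right)⟩
  map_top' := eq_true hJ.top_notMem
  map_bot' := eq_false (not_not_intro J.bot_mem)

@[simp]
theorem IsPrime.notMemHom_apply [Lattice B] [BoundedOrder B] {J : Ideal B} (hJ : J.IsPrime)
    (d : B) : hJ.notMemHom_s8 d = (d ∉ J) :=
  rfl

theorem exists_boundedLatticeHom_prop_of_top_notMem [DistribLattice B] [BoundedOrder B]
    {I : Ideal B} (hI : ⊤ ∉ I) : ∃ χ : BoundedLatticeHom B Prop, ∀ x ∈ I, ¬χ x := by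
  have hdisj : Disjoint (PFilter.principal (⊤ : B) : Set B) I :=
    Set.disjoint_left.2 fun x hx hxI => hI (top_le_iff.1 hx ▸ hxI)
  obtain ⟨J, hJ, hIJ, -⟩ := DistribLattice.prime_ideal_of_disjoint_filter_ideal hdisj
  exact ⟨hJ.notMemHom_s8, fun x hx => by simpa using hIJ hx⟩

end Order.Ideal

namespace BoundedLatticeHom

def pi {A ι : Type*} {α : ι → Type*} [Lattice A] [BoundedOrder A] [∀ i, Lattice (α i)]
    [∀ i, BoundedOrder (α i)]
    (φ : ∀ i, BoundedLatticeHom A (α i)) : BoundedLatticeHom A (∀ i, α i) where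
  toFun a i := φ i a
  map_sup' a b := funext fun i => map_sup (φ i) a b
  map_inf' a b := funext fun i => map_inf (φ i) a b
  map_top' := funext fun i => map_top (φ i)
  map_bot' := funext fun i => map_bot (φ i)

variable {A B : Type*} [BooleanAlgebra A] [BooleanAlgebra B]

theorem exists_prop_extension (f : BoundedLatticeHom A B) (φ : BoundedLatticeHom A Prop) (c : B)
    (h : ∀ a, c ≤ f a → φ a) : ∃ ψ : BoundedLatticeHom B Prop, ψ c ∧ ∀ a, ψ (f a) = φ a := by
  set K := (Order.Ideal.comap φ (Order.Ideal.principal ⊥)).map f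
  set I := K ⊔ Order.Ideal.principal cᶜ
  have hI : ⊤ ∉ I := by
    rw [Order.Ideal.mem_sup]
    rintro ⟨x, ⟨a, ha, hxa⟩, y, hy, hxy⟩
    have hca : c ≤ f a := compl_compl c ▸ codisjoint_iff_compl_le_left.1 <|
      codisjoint_iff_le_sup.2 (hxy.trans (sup_le_sup hxa hy))
    exact ha (h a hca)
  obtain ⟨ψ, hψ⟩ := Order.Ideal.exists_boundedLatticeHom_prop_of_top_notMem hI
  have hψ_of_not {a : A} (ha : ¬φ a) : ¬ψ (f a) :=
    hψ _ <| (le_sup_left : K ≤ I) ⟨a, by simpa using ha, le_rfl⟩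
  refine ⟨ψ, ?_, fun a => propext ⟨fun hψa => by_contra fun hφa => hψ_of_not hφa hψa,
    fun hφa => ?_⟩⟩
  · simpa using hψ cᶜ <| (le_sup_right : _ ≤ I) Order.Ideal.mem_principal_self
  · simpa using hψ_of_not (a := aᶜ) (by simpa using hφa)

theorem exists_prop_separating_of_notMem_range (f : BoundedLatticeHom A B) {b : B}
    (hb : b ∉ Set.range f) :
    ∃ ψ₁ ψ₂ : BoundedLatticeHom B Prop, (∀ a, ψ₁ (f a) = ψ₂ (f a)) ∧ ψ₁ b ∧ ¬ψ₂ b := by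
  set I := Order.Ideal.comap f (Order.Ideal.principal b) ⊔
    Order.Ideal.comap f (Order.Ideal.principal bᶜ)
  have hI : ⊤ ∉ I := by
    rw [Order.Ideal.mem_sup]
    rintro ⟨a₁, h₁, a₂, h₂, htop⟩
    have ha : a₂ᶜ ≤ a₁ := codisjoint_iff_compl_le_left.1 (codisjoint_iff_le_sup.2 htop)
    refine hb ⟨a₁, le_antisymm h₁ ?_⟩
    calc b ≤ (f a₂)ᶜ := le_compl_comm.1 h₂
      _ = f a₂ᶜ := (map_compl' f a₂).symm
      _ ≤ f a₁ := OrderHomClass.mono f ha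
  obtain ⟨φ, hφ⟩ := Order.Ideal.exists_boundedLatticeHom_prop_of_top_notMem hI
  have hφ_of_le {c : B} (hc : ∀ a, f a ≤ cᶜ → ¬φ a) (a : A) (hca : c ≤ f a) : φ a := by
    simpa using hc aᶜ (by simpa using compl_le_compl hca)
  obtain ⟨ψ₁, hψ₁b, hψ₁⟩ := f.exists_prop_extension φ b <| hφ_of_le fun a ha =>
    hφ a <| (le_sup_right : _ ≤ I) ha
  obtain ⟨ψ₂, hψ₂b, hψ₂⟩ := f.exists_prop_extension φ bᶜ <| hφ_of_le fun a ha =>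
    hφ a <| (le_sup_left : _ ≤ I) (by simpa using ha)
  exact ⟨ψ₁, ψ₂, fun a => (hψ₁ a).trans (hψ₂ a).symm, hψ₁b, by simpa using hψ₂b⟩

end BoundedLatticeHom

theorem stmt_8_general {A B : Type u} [BooleanAlgebra A] [BooleanAlgebra B]
    (f : BoundedLatticeHom A B) :
    ∃ (C : Type u) (_ : BooleanAlgebra C) (g h : BoundedLatticeHom B C),
      Set.range ⇑f = {b : B | g b = h b} := by
  let S := {p : BoundedLatticeHom B Prop × BoundedLatticeHom B Prop // ∀ a, p.1 (f a) = p.2 (f a)}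
  refine ⟨S → Prop, inferInstance, .pi fun p => p.1.1, .pi fun p => p.1.2, ?_⟩
  ext b
  refine ⟨?_, fun hb => by_contra fun hbf => ?_⟩
  · rintro ⟨a, rfl⟩
    exact funext fun p => p.2 a
  · obtain ⟨ψ₁, ψ₂, hψ, h₁, h₂⟩ := f.exists_prop_separating_of_notMem_range hbf
    exact h₂ ((congrFun hb ⟨(ψ₁, ψ₂), hψ⟩).mp h₁)

/-- Every monomorphism in the category of Boolean algebras is regular: every injective Boolean
algebra homomorphism is an equalizer of a pair of homomorphisms. -/
theorem stmt_8 {A B : Type u} [BooleanAlgebra A] [BooleanAlgebra B]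
    (f : BoundedLatticeHom A B) (hf : Function.Injective ⇑f) :
    ∃ (C : Type u) (_ : BooleanAlgebra C) (g h : BoundedLatticeHom B C),
      Set.range ⇑f = {b : B | g b = h b} :=
  stmt_8_general f
end

section
/- Let X be a set and equip the function space X → Prop with the product of the Sierpiński topology on Prop (in which {True} is open but {False} is not). Then this space is T0 and quasi-sober (hence sober), and its frame of open sets is the free frame on X with the subbasic open sets as generators: for every frame L and every function f : X → L there is a unique frame homomorphism h from the frame of opens of X → Prop to L such that h({g | g x}) = f(x) for every x ∈ X. -/
/-! Opens of `X → Prop` are upper sets for the pointwise order, and an open `U` is the union of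
the basic opens `{g | ∀ x ∈ S, g x}` (`S` finite) whose least point `(· ∈ S)` lies in `U`. So a
frame homomorphism is determined by its values on the subbasic opens, and
`U ↦ ⨆ {S.inf f | (· ∈ S) ∈ U}` is one: it preserves joins because a least point lying in a union
already lies in one member.

A closed set `Z` is a lower set, so its generic point can only be the pointwise supremum
`sSup Z`. This lies in `Z` when `Z` is irreducible: otherwise some finite `(· ∈ S) ≤ sSup Z` lies
outside `Z`, yet irreducibility makes the opens `{g | g x}`, `x ∈ S`, which all meet `Z`, meet `Z`
in a common point `g ≥ (· ∈ S)`. -/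

universe u v

open TopologicalSpace

open Topology

namespace SierpinskiPower

variable {X : Type u}

theorem specializes_iff_le {g g' : X → Prop} : g ⤳ g' ↔ g' ≤ g := by
  simp only [specializes_pi, Topology.IsUpperSet.specializes_iff_le, Pi.le_def]

theorem isUpperSet_of_isOpen {U : Set (X → Prop)} (hU : IsOpen U) : IsUpperSet U :=
  fun _ _ hle hg => (specializes_iff_le.mpr hle).mem_open hU hg

theorem isLowerSet_of_isClosed {Z : Set (X → Prop)} (hZ : IsClosed Z) : IsLowerSet Z :=
  fun _ _ hle hg => (specializes_iff_le.mpr hle).mem_closed hZ hg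

theorem isOpen_setOf_apply (x : X) : IsOpen {g : X → Prop | g x} :=
  continuous_Prop.mp (continuous_apply x)

theorem exists_finset_le_mem_of_mem_isOpen {U : Set (X → Prop)} (hU : IsOpen U) {g : X → Prop}
    (hg : g ∈ U) : ∃ S : Finset X, (· ∈ S) ≤ g ∧ (· ∈ S) ∈ U := by
  classical
  obtain ⟨I, u, hu, hIU⟩ := isOpen_pi_iff.mp hU g hg
  refine ⟨{x ∈ I | g x}, fun x hx => (Finset.mem_filter.mp hx).2, hIU fun x hx => ?_⟩
  exact Topology.IsUpperSet.isOpen_iff_isUpperSet.mp (hu x hx).1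
    (fun hgx => Finset.mem_filter.mpr ⟨hx, hgx⟩) (hu x hx).2

theorem _root_.IsIrreducible.exists_finset_le_mem {Z : Set (X → Prop)} (hZ : IsIrreducible Z)
    {S : Finset X} (hS : ∀ x ∈ S, ∃ g ∈ Z, g x) : ∃ g ∈ Z, (· ∈ S) ≤ g := by
  classical
  obtain ⟨g, hgZ, hgS⟩ := isIrreducible_iff_sInter.mp hZ (S.image fun x => {g | g x})
    (by simpa using fun x _ => isOpen_setOf_apply x) (by simpa [Set.Nonempty] using hS)
  exact ⟨g, hgZ, fun x hx => by simpa using hgS _ (Finset.mem_image_of_mem _ hx)⟩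

theorem sSup_mem_of_isIrreducible {Z : Set (X → Prop)} (hirr : IsIrreducible Z)
    (hcl : IsClosed Z) : sSup Z ∈ Z := by
  by_contra hZ
  obtain ⟨S, hSle, hSZ⟩ := exists_finset_le_mem_of_mem_isOpen hcl.isOpen_compl hZ
  obtain ⟨g, hgZ, hSg⟩ := hirr.exists_finset_le_mem fun x hx => by simpa using hSle x hx
  exact hSZ (isLowerSet_of_isClosed hcl hSg hgZ)

theorem isGenericPoint_sSup {Z : Set (X → Prop)} (hirr : IsIrreducible Z) (hcl : IsClosed Z) :
    IsGenericPoint (sSup Z) Z :=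
  isGenericPoint_iff_specializes.mpr fun _ =>
    ⟨fun h => h.mem_closed hcl (sSup_mem_of_isIrreducible hirr hcl),
      fun hg => specializes_iff_le.mpr (le_sSup hg)⟩

instance : QuasiSober (X → Prop) :=
  ⟨fun hirr hcl => ⟨_, isGenericPoint_sSup hirr hcl⟩⟩

def subbasicOpen (x : X) : Opens (X → Prop) := ⟨{g | g x}, isOpen_setOf_apply x⟩

theorem mem_finset_inf_subbasicOpen {S : Finset X} {g : X → Prop} :
    g ∈ S.inf subbasicOpen ↔ (· ∈ S) ≤ g := by
  simp [← SetLike.mem_coe, Opens.coe_finset_inf, Finset.inf_set_eq_iInter, subbasicOpen, Pi.le_def]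

theorem finset_inf_subbasicOpen_le_iff {S : Finset X} {U : Opens (X → Prop)} :
    S.inf subbasicOpen ≤ U ↔ (· ∈ S) ∈ U :=
  ⟨fun h => h (mem_finset_inf_subbasicOpen.mpr le_rfl),
    fun h _ hg => isUpperSet_of_isOpen U.isOpen (mem_finset_inf_subbasicOpen.mp hg) h⟩

theorem iSup_finset_inf_subbasicOpen (U : Opens (X → Prop)) :
    ⨆ (S : Finset X) (_ : S.inf subbasicOpen ≤ U), S.inf subbasicOpen = U := by
  refine le_antisymm (iSup₂_le fun _ h => h) fun g hg => ?_
  obtain ⟨S, hSg, hSU⟩ := exists_finset_le_mem_of_mem_isOpen U.isOpen hg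
  simp only [Opens.mem_iSup]
  exact ⟨S, finset_inf_subbasicOpen_le_iff.mpr hSU, mem_finset_inf_subbasicOpen.mpr hSg⟩

variable {L : Type v} [Order.Frame L]

noncomputable def liftFun (f : X → L) (U : Opens (X → Prop)) : L :=
  ⨆ (S : Finset X) (_ : S.inf subbasicOpen ≤ U), S.inf f

theorem liftFun_mono (f : X → L) : Monotone (liftFun f) :=
  fun _ _ hUV => iSup₂_mono' fun S hS => ⟨S, hS.trans hUV, le_rfl⟩

theorem le_liftFun (f : X → L) {S : Finset X} {U : Opens (X → Prop)}
    (hS : S.inf subbasicOpen ≤ U) : S.inf f ≤ liftFun f U :=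
  le_iSup₂_of_le S hS le_rfl

theorem liftFun_inf (f : X → L) (U V : Opens (X → Prop)) :
    liftFun f (U ⊓ V) = liftFun f U ⊓ liftFun f V := by
  classical
  refine le_antisymm (le_inf (liftFun_mono f inf_le_left) (liftFun_mono f inf_le_right)) ?_
  simp only [liftFun, iSup_inf_eq, inf_iSup_eq]
  refine iSup₂_le fun T hT => iSup₂_le fun S hS => ?_
  calc S.inf f ⊓ T.inf f = (S ∪ T).inf f := Finset.inf_union.symm
    _ ≤ liftFun f (U ⊓ V) := le_liftFun f (by rw [Finset.inf_union]; exact inf_le_inf hS hT)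

theorem liftFun_top (f : X → L) : liftFun f ⊤ = ⊤ :=
  top_unique (by simpa using le_liftFun f (S := ∅) le_top)

theorem liftFun_sSup (f : X → L) (s : Set (Opens (X → Prop))) :
    liftFun f (sSup s) = ⨆ U ∈ s, liftFun f U := by
  refine le_antisymm (iSup₂_le fun S hS => ?_) (iSup₂_le fun U hU => liftFun_mono f (le_sSup hU))
  obtain ⟨U, hU, hSU⟩ := Opens.mem_sSup.mp (finset_inf_subbasicOpen_le_iff.mp hS)
  exact le_iSup₂_of_le U hU (le_liftFun f (finset_inf_subbasicOpen_le_iff.mpr hSU))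

noncomputable def lift (f : X → L) : FrameHom (Opens (X → Prop)) L where
  toFun := liftFun f
  map_inf' := liftFun_inf f
  map_top' := liftFun_top f
  map_sSup' s := by rw [sSup_image]; exact liftFun_sSup f s

theorem lift_subbasicOpen (f : X → L) (x : X) : lift f (subbasicOpen x) = f x := by
  show liftFun f (subbasicOpen x) = f x
  refine le_antisymm (iSup₂_le fun S hS => Finset.inf_le ?_) ?_
  · exact finset_inf_subbasicOpen_le_iff.mp hS
  · simpa using le_liftFun f (S := {x}) (by simp)

theorem eq_lift {f : X → L} (h : FrameHom (Opens (X → Prop)) L)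
    (hf : ∀ x, h (subbasicOpen x) = f x) : h = lift f := by
  ext U
  conv_lhs => rw [← iSup_finset_inf_subbasicOpen U]
  simp only [map_iSup₂, map_finset_inf, show ⇑h ∘ subbasicOpen = f from funext hf]
  rfl

end SierpinskiPower

/-- The power `X → Prop` of the Sierpiński space is T0 and quasi-sober (hence sober), and its
frame of open sets is the free frame on `X`, generated by the subbasic open sets
`{g | g x}`. -/
theorem stmt_9 (X : Type u) :
    T0Space (X → Prop) ∧ QuasiSober (X → Prop) ∧
      ∀ (L : Type v) [Order.Frame L] (f : X → L),
        ∃! h : FrameHom (Opens (X → Prop)) L,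
          ∀ (x : X) (U : Opens (X → Prop)), (U : Set (X → Prop)) = {g | g x} → h U = f x := by
  refine ⟨inferInstance, inferInstance, fun L _ f => ⟨SierpinskiPower.lift f, ?_, ?_⟩⟩
  · rintro x U hU
    rw [show U = SierpinskiPower.subbasicOpen x from Opens.ext hU,
      SierpinskiPower.lift_subbasicOpen]
  · exact fun h hh => SierpinskiPower.eq_lift h fun x => hh x _ rfl
end

section
/- Let F be a frame with a map η : ℕ → F having the universal property of the free frame on ℕ: for every frame M and function f : ℕ → M there is a unique frame homomorphism F → M carrying each η(n) to f(n). Let L be a frame, q : F → L a surjective frame homomorphism, and a, b : ℕ → F sequences such that q(aₙ) = q(bₙ) for all n and such that for every frame M and frame homomorphism g : F → M with g(aₙ) = g(bₙ) for all n there is a frame homomorphism h : L → M with h ∘ q = g (so L is a countably presented frame). Then L is spatial: for all x ≠ y in L there is a frame homomorphism p : L → Prop with p(x) ≠ p(y). -/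
/-!
In the free frame on `ι` every element is a join of finite meets `S.inf η` of generators, and
points of it are the same as sets of generators. Given `¬ q u ≤ q v`, build finite sets
`S₀ ⊆ S₁ ⊆ ⋯` with `S₀.inf η ≤ u` and `¬ q (Sₖ.inf η) ≤ q v`, where stage `k` serves one
relation `q c ≤ q d`: if `Sₖ.inf η ≤ c`, then `Sₖ₊₁.inf η ≤ d`. This is possible because
`q (Sₖ.inf η ⊓ d) = q (Sₖ.inf η)` and `d` is a join of basic elements. Serving each of the
countably many relations at arbitrarily late stages, the generators in `⋃ Sₖ` form a point of
the free frame that respects all relations, contains `u` and omits `v`; it factors through `L`.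
-/

open Order OrderDual

instance ULift.instFrame {α : Type*} [Frame α] : Frame (ULift α) :=
  .ofMinimalAxioms <| Function.frameMinimalAxioms Frame.MinimalAxioms.of ULift.down .rfl
    (fun _ _ => rfl) fun s => (map_sSup ULift.orderIso s).trans sSup_image

namespace Order.Frame

variable {ι : Type} {F : Type u} [Frame F]

def IsFreeOn (η : ι → F) : Prop :=
  ∀ (M : Type u) [Frame M] (f : ι → M), ∃! h : FrameHom F M, ∀ i, h (η i) = f i

/-- Lower sets of `(Finset ι)ᵒᵈ` are the families of finite sets closed under supersets; they
form the free frame on `ι`, and this is its comparison map to `F`. -/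
def iSupFinsetInf (η : ι → F) : FrameHom (LowerSet (Finset ι)ᵒᵈ) F where
  toFun D := ⨆ S ∈ D, (ofDual S).inf η
  map_inf' D E := by
    classical
    refine le_antisymm (iSup₂_le fun S hS => le_inf (le_iSup₂_of_le S hS.1 le_rfl)
      (le_iSup₂_of_le S hS.2 le_rfl)) ?_
    simp only [iSup_inf_eq, inf_iSup_eq]
    refine iSup₂_le fun S hS => iSup₂_le fun T hT => ?_
    rw [← Finset.inf_union]
    exact le_iSup₂_of_le (toDual (ofDual T ∪ ofDual S))
      ⟨D.lower Finset.subset_union_left hT, E.lower Finset.subset_union_right hS⟩ le_rfl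
  map_top' := top_unique <| le_iSup₂_of_le (toDual ∅) trivial Finset.inf_empty.ge
  map_sSup' 𝒟 := by
    simp only [LowerSet.mem_sSup_iff, iSup_exists, iSup_and, sSup_image]
    exact iSup_comm.trans (iSup_congr fun _ => iSup_comm)

theorem iSupFinsetInf_Iic (η : ι → F) (i : ι) :
    iSupFinsetInf η (LowerSet.Iic (toDual {i})) = η i :=
  le_antisymm (iSup₂_le fun _ hS => Finset.inf_le (Finset.singleton_subset_iff.mp hS))
    (le_iSup₂_of_le (toDual {i}) (LowerSet.mem_Iic_iff.2 le_rfl) Finset.inf_singleton.ge)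

variable {η : ι → F}

/-- `F` is a retract of the frame of lower sets through `iSupFinsetInf η`, by uniqueness of the
frame homomorphism `F → F` fixing the generators. -/
theorem IsFreeOn.eq_iSup_finsetInf (hη : IsFreeOn η) (w : F) :
    w = ⨆ (S : Finset ι) (_ : S.inf η ≤ w), S.inf η := by
  obtain ⟨h, hh, -⟩ := hη (ULift (LowerSet (Finset ι)ᵒᵈ)) fun i => .up (.Iic (toDual {i}))
  obtain ⟨_, -, huniq⟩ := hη F η
  have hret : (iSupFinsetInf η).comp
      (((ULift.orderIso.{u} : ULift (LowerSet (Finset ι)ᵒᵈ) ≃o _) : FrameHom _ _).comp h) =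
      FrameHom.id F :=
    (huniq _ fun i => (congrArg _ (congrArg ULift.down (hh i))).trans (iSupFinsetInf_Iic η i)).trans
      (huniq _ fun _ => rfl).symm
  have hw : ⨆ S ∈ (h w).down, (ofDual S).inf η = w := DFunLike.congr_fun hret w
  refine le_antisymm ?_ (iSup₂_le fun _ hS => hS)
  conv_lhs => rw [← hw]
  exact iSup₂_le fun S hS => le_iSup₂_of_le (ofDual S) (hw ▸ le_iSup₂_of_le S hS le_rfl) le_rfl

theorem IsFreeOn.exists_frameHom_prop (hη : IsFreeOn η) (α : ι → Prop) :
    ∃ p : FrameHom F Prop, ∀ w, p w ↔ ∃ S : Finset ι, (∀ i ∈ S, α i) ∧ S.inf η ≤ w := by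
  obtain ⟨h, hh, -⟩ := hη (ULift Prop) fun i => .up (α i)
  let p : FrameHom F Prop := ((ULift.orderIso.{u} : ULift Prop ≃o Prop) : FrameHom _ _).comp h
  have hp : ∀ S : Finset ι, p (S.inf η) ↔ ∀ i ∈ S, α i := fun S => by
    rw [map_finset_inf, Finset.inf_eq_iInf]
    simp [p, hh]
  refine ⟨p, fun w => ⟨fun hw => ?_, fun ⟨S, hS, hSw⟩ => OrderHomClass.mono p hSw ((hp S).2 hS)⟩⟩
  rw [hη.eq_iSup_finsetInf w] at hw
  simp only [map_iSup, iSup_Prop_eq] at hw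
  obtain ⟨S, hSw, hS⟩ := hw
  exact ⟨S, (hp S).1 hS, hSw⟩

theorem IsFreeOn.exists_frameHom_prop_of_monotone (hη : IsFreeOn η) {f : ℕ → Finset ι}
    (hf : Monotone f) : ∃ p : FrameHom F Prop, ∀ w, p w ↔ ∃ k, (f k).inf η ≤ w := by
  obtain ⟨p, hp⟩ := hη.exists_frameHom_prop fun i => i ∈ ⋃ k, (f k : Set ι)
  refine ⟨p, fun w => (hp w).trans ⟨fun ⟨S, hS, hSw⟩ => ?_, fun ⟨k, hk⟩ =>
    ⟨f k, fun i hi => Set.mem_iUnion_of_mem k hi, hk⟩⟩⟩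
  have hmono : Monotone fun k => (f k : Set ι) := fun _ _ hkl => Finset.coe_subset.2 (hf hkl)
  obtain ⟨k, hk⟩ := hmono.directed_le.exists_mem_subset_of_finset_subset_biUnion hS
  exact ⟨k, (Finset.inf_mono hk).trans hSw⟩

variable {L : Type u} [Frame L] (q : FrameHom F L)

theorem IsFreeOn.exists_superset_not_le (hη : IsFreeOn η) {S : Finset ι} {w v : F}
    (h : ¬ q (S.inf η ⊓ w) ≤ q v) : ∃ T, S ⊆ T ∧ T.inf η ≤ w ∧ ¬ q (T.inf η) ≤ q v := by
  classical
  by_contra! hT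
  refine h ?_
  rw [hη.eq_iSup_finsetInf w, inf_iSup₂_eq, map_iSup₂]
  refine iSup₂_le fun T hTw => ?_
  rw [← Finset.inf_union]
  exact hT _ Finset.subset_union_left ((Finset.inf_mono Finset.subset_union_right).trans hTw)

theorem IsFreeOn.exists_superset_le_of_le (hη : IsFreeOn η) {c d v : F} (hcd : q c ≤ q d)
    {S : Finset ι} (hS : ¬ q (S.inf η) ≤ q v) :
    ∃ T, S ⊆ T ∧ ¬ q (T.inf η) ≤ q v ∧ (S.inf η ≤ c → T.inf η ≤ d) := by
  by_cases hc : S.inf η ≤ c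
  · have hSd : q (S.inf η ⊓ d) = q (S.inf η) := by
      rw [map_inf, inf_eq_left]
      exact (OrderHomClass.mono q hc).trans hcd
    obtain ⟨T, hST, hTd, hT⟩ := hη.exists_superset_not_le q (hSd ▸ hS)
    exact ⟨T, hST, hT, fun _ => hTd⟩
  · exact ⟨S, subset_rfl, hS, fun h => absurd h hc⟩

theorem IsFreeOn.exists_frameHom_prop_of_not_le {κ : Type*} [Countable κ] [Nonempty κ]
    (hη : IsFreeOn η) {c d : κ → F} (hcd : ∀ j, q (c j) ≤ q (d j)) {u v : F}
    (huv : ¬ q u ≤ q v) : ∃ p : FrameHom F Prop, (∀ j, p (c j) → p (d j)) ∧ p u ∧ ¬ p v := by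
  obtain ⟨e, he⟩ := exists_surjective_nat κ
  obtain ⟨S₀, -, hS₀u, hS₀v⟩ :=
    hη.exists_superset_not_le q (S := ∅) (by rwa [Finset.inf_empty, top_inf_eq])
  -- Stage `k` serves the relation `e k.unpair.1`, so every relation is served at arbitrarily
  -- late stages.
  choose next hnext using fun (k : ℕ) (S : {S : Finset ι // ¬ q (S.inf η) ≤ q v}) =>
    hη.exists_superset_le_of_le q (hcd (e k.unpair.1)) S.2
  let chain : ℕ → {S : Finset ι // ¬ q (S.inf η) ≤ q v} :=
    fun k => Nat.rec ⟨S₀, hS₀v⟩ (fun k S => ⟨next k S, (hnext k S).2.1⟩) k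
  have hchain : Monotone fun k => (chain k).1 := monotone_nat_of_le_succ fun k => (hnext k _).1
  obtain ⟨p, hp⟩ := hη.exists_frameHom_prop_of_monotone hchain
  refine ⟨p, fun j hj => ?_, (hp u).2 ⟨0, hS₀u⟩, fun hv => ?_⟩
  · obtain ⟨k₀, hk₀⟩ := (hp _).1 hj
    obtain ⟨m, rfl⟩ := he j
    have hserve := (hnext (Nat.pair m k₀) (chain (Nat.pair m k₀))).2.2
    rw [Nat.unpair_pair] at hserve
    exact (hp _).2 ⟨Nat.pair m k₀ + 1,
      hserve ((Finset.inf_mono (hchain (Nat.right_le_pair m k₀))).trans hk₀)⟩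
  · obtain ⟨k, hk⟩ := (hp v).1 hv
    exact (chain k).2 (OrderHomClass.mono q hk)

theorem exists_frameHom_prop_comp_eq {κ : Type*} {a b : κ → F}
    (hpres : ∀ (M : Type u) [Frame M] (g : FrameHom F M),
      (∀ j, g (a j) = g (b j)) → ∃ h : FrameHom L M, h.comp q = g)
    (p : FrameHom F Prop) (hp : ∀ j, p (a j) ↔ p (b j)) :
    ∃ p' : FrameHom L Prop, p'.comp q = p := by
  let up : FrameHom Prop (ULift Prop) := (ULift.orderIso.{u} : ULift Prop ≃o Prop).symm
  obtain ⟨h, hh⟩ := hpres _ (up.comp p) fun j => congrArg ULift.up (propext (hp j))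
  refine ⟨((ULift.orderIso.{u} : ULift Prop ≃o Prop) : FrameHom _ _).comp h,
    FrameHom.ext fun w => ?_⟩
  exact congrArg ULift.down (DFunLike.congr_fun hh w)

end Order.Frame

/-- **Spatiality of countably presented frames** (Fourman–Grayson, Heckmann). If `F` is the free
frame on countably many generators `η : ℕ → F` and `L` is the quotient of `F` by countably many
relations `q (a n) = q (b n)`, then `L` has enough points: frame homomorphisms `L → Prop`
separate elements of `L`. -/
theorem stmt_10 {F : Type u} [Order.Frame F] (η : ℕ → F)
    (hfree : ∀ (M : Type u) [Order.Frame M] (f : ℕ → M),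
      ∃! h : FrameHom F M, ∀ n : ℕ, h (η n) = f n)
    {L : Type u} [Order.Frame L] (q : FrameHom F L) (hq : Function.Surjective ⇑q)
    (a b : ℕ → F) (hab : ∀ n : ℕ, q (a n) = q (b n))
    (hpres : ∀ (M : Type u) [Order.Frame M] (g : FrameHom F M),
      (∀ n : ℕ, g (a n) = g (b n)) → ∃ h : FrameHom L M, h.comp q = g) :
    ∀ x y : L, x ≠ y → ∃ p : FrameHom L Prop, p x ≠ p y := by
  have hsep : ∀ x y : L, ¬ x ≤ y → ∃ p : FrameHom L Prop, p x ∧ ¬ p y := by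
    intro x y hxy
    obtain ⟨u, rfl⟩ := hq x
    obtain ⟨v, rfl⟩ := hq y
    obtain ⟨p, hpab, hpu, hpv⟩ := Frame.IsFreeOn.exists_frameHom_prop_of_not_le q hfree
      (c := Sum.elim a b) (d := Sum.elim b a) (Sum.rec (fun n => (hab n).le) fun n => (hab n).ge)
      hxy
    obtain ⟨p', hp'⟩ :=
      Frame.exists_frameHom_prop_comp_eq q hpres p fun n => ⟨hpab (.inl n), hpab (.inr n)⟩
    rw [← hp'] at hpu hpv
    exact ⟨p', hpu, hpv⟩
  intro x y hxy
  by_cases hle : x ≤ y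
  · obtain ⟨p, hy, hx⟩ := hsep y x fun hyx => hxy (le_antisymm hle hyx)
    exact ⟨p, fun h => hx (h ▸ hy)⟩
  · obtain ⟨p, hx, hy⟩ := hsep x y hle
    exact ⟨p, fun h => hy (h ▸ hx)⟩
end

section
/- Let A be a complete lattice and r a binary relation on A. Let s be the smallest binary relation on A such that: (i) s is reflexive; (ii) for every subset S ⊆ A and b ∈ A, if s a b for all a ∈ S then s (sSup S) b; (iii) if a ≤ b and s b c then s a c; and (iv) if r a b and s b c then s a c. Then s is transitive (and hence s is the smallest order-congruence of the complete join-semilattice A containing r). -/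
universe u

theorem stmt_12_general {A : Type u} [CompleteLattice A] (r s : A → A → Prop)
    (hsup : ∀ (S : Set A) (b : A), (∀ a ∈ S, s a b) → s (sSup S) b)
    (hle : ∀ a b c : A, a ≤ b → s b c → s a c)
    (hr : ∀ a b c : A, r a b → s b c → s a c)
    (hmin : ∀ t : A → A → Prop, (∀ a : A, t a a) →
      (∀ (S : Set A) (b : A), (∀ a ∈ S, t a b) → t (sSup S) b) →
      (∀ a b c : A, a ≤ b → t b c → t a c) →
      (∀ a b c : A, r a b → t b c → t a c) →
      ∀ a b : A, s a b → t a b) :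
    ∀ a b c : A, s a b → s b c → s a c := by
  intro a b c hab hbc
  -- The relation "every `s`-successor of `y` is one of `x`" has the four closure properties,
  -- so by minimality it contains `s`.
  refine hmin (fun x y => ∀ z, s y z → s x z) (fun _ _ h => h) ?_ ?_ ?_ a b hab c hbc
  · exact fun S y hS z hyz => hsup S z fun x hx => hS x hx z hyz
  · exact fun x y _ hxy hy z hz => hle x y z hxy (hy z hz)
  · exact fun x y _ hxy hy z hz => hr x y z hxy (hy z hz)

/-- Let `s` be the smallest binary relation on a complete lattice which is reflexive, closed
under suprema on the left, left-compatible with `≤`, and left-compatible with a given relation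
`r`. Then `s` is transitive (hence is the order-congruence of the complete join-semilattice
generated by `r`). -/
theorem stmt_12 {A : Type u} [CompleteLattice A] (r s : A → A → Prop)
    (hrefl : ∀ a : A, s a a)
    (hsup : ∀ (S : Set A) (b : A), (∀ a ∈ S, s a b) → s (sSup S) b)
    (hle : ∀ a b c : A, a ≤ b → s b c → s a c)
    (hr : ∀ a b c : A, r a b → s b c → s a c)
    (hmin : ∀ t : A → A → Prop, (∀ a : A, t a a) →
      (∀ (S : Set A) (b : A), (∀ a ∈ S, t a b) → t (sSup S) b) →
      (∀ a b c : A, a ≤ b → t b c → t a c) →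
      (∀ a b c : A, r a b → t b c → t a c) →
      ∀ a b : A, s a b → t a b) :
    ∀ a b c : A, s a b → s b c → s a c :=
  stmt_12_general r s hsup hle hr hmin
end

section
/- Let (A_i)_{i∈I} be a family of sets, each equipped with a relation ◁_i between subsets of A_i satisfying: (monotonicity) if B ⊇ B₀, B₀ ◁_i C₀ and C₀ ⊆ C then B ◁_i C; (reflexivity) {a} ◁_i {a} for every a ∈ A_i; and (transitivity) if B ∪ C ◁_i D ∪ E, and B ◁_i {c} ∪ E for every c ∈ C, and B ∪ {d} ◁_i E for every d ∈ D, then B ◁_i E. On the disjoint union of the A_i, define B ◁ C iff there exists i such that (A_i ∩ B) ◁_i (A_i ∩ C), where A_i ∩ B denotes the set of elements of A_i whose image in the disjoint union lies in B. Then ◁ again satisfies monotonicity, reflexivity, and transitivity, and it is the smallest relation satisfying monotonicity whose restriction along each inclusion A_i → ⨿_j A_j contains ◁_i. -/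
universe u v

/-- Monotonicity axiom for a relation between subsets. -/
def RelMono {α : Type v} (R : Set α → Set α → Prop) : Prop :=
  ∀ B₀ B C₀ C : Set α, B₀ ⊆ B → R B₀ C₀ → C₀ ⊆ C → R B C

/-- Reflexivity axiom for a relation between subsets. -/
def RelRefl {α : Type v} (R : Set α → Set α → Prop) : Prop :=
  ∀ a : α, R {a} {a}

/-- Transitivity (cut) axiom for a relation between subsets. -/
def RelTrans {α : Type v} (R : Set α → Set α → Prop) : Prop :=
  ∀ B C D E : Set α, R (B ∪ C) (D ∪ E) → (∀ c ∈ C, R B (insert c E)) →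
    (∀ d ∈ D, R (insert d B) E) → R B E

/-!
Monotonicity, reflexivity and minimality are immediate. For transitivity, suppose that `B ◁ E`
fails in every summand. The premise `B ∪ C ◁ D ∪ E` holds in some summand `i`. A premise
`B ◁ {c} ∪ E` with `c` in summand `i` differs from `B ◁ E` only in summand `i`, so it must hold
there; likewise for `B ∪ {d} ◁ E`. The cut rule of `◁ᵢ` then gives `B ◁ E` in summand `i`,
a contradiction.
-/

namespace Set

variable {I : Type u} {A : I → Type v}

theorem sigma_mk_preimage_insert_self (i : I) (x : A i) (E : Set (Σ i, A i)) :
    Sigma.mk i ⁻¹' insert ⟨i, x⟩ E = insert x (Sigma.mk i ⁻¹' E) := by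
  ext y; simp

theorem sigma_mk_preimage_insert_of_ne {i j : I} (hij : j ≠ i) (x : A i) (E : Set (Σ i, A i)) :
    Sigma.mk j ⁻¹' insert ⟨i, x⟩ E = Sigma.mk j ⁻¹' E := by
  ext y; simp [hij]

theorem sigma_mk_preimage_singleton_self (i : I) (x : A i) :
    Sigma.mk i ⁻¹' ({⟨i, x⟩} : Set (Σ i, A i)) = {x} := by
  ext y; simp

end Set

open Set

section SigmaRel

variable {I : Type u} {A : I → Type v} (R : ∀ i, Set (A i) → Set (A i) → Prop)

def SigmaRel (B C : Set (Σ i, A i)) : Prop :=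
  ∃ i, R i (Sigma.mk i ⁻¹' B) (Sigma.mk i ⁻¹' C)

variable {R}

theorem RelMono.sigmaRel (hmono : ∀ i, RelMono (R i)) : RelMono (SigmaRel R) :=
  fun _ _ _ _ hB ⟨i, hi⟩ hC => ⟨i, hmono i _ _ _ _ (preimage_mono hB) hi (preimage_mono hC)⟩

theorem RelRefl.sigmaRel (hrefl : ∀ i, RelRefl (R i)) : RelRefl (SigmaRel R) := by
  rintro ⟨i, a⟩
  exact ⟨i, by simpa only [sigma_mk_preimage_singleton_self] using hrefl i a⟩

theorem SigmaRel.of_preimage_eq_of_ne {B E B' E' : Set (Σ i, A i)} (hBE : ¬ SigmaRel R B E)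
    {i : I} (hB : ∀ j ≠ i, Sigma.mk j ⁻¹' B' = Sigma.mk j ⁻¹' B)
    (hE : ∀ j ≠ i, Sigma.mk j ⁻¹' E' = Sigma.mk j ⁻¹' E) (h : SigmaRel R B' E') :
    R i (Sigma.mk i ⁻¹' B') (Sigma.mk i ⁻¹' E') := by
  obtain ⟨j, hj⟩ := h
  obtain rfl | hji := eq_or_ne j i
  · exact hj
  · rw [hB j hji, hE j hji] at hj
    exact absurd ⟨j, hj⟩ hBE

theorem RelTrans.sigmaRel (htrans : ∀ i, RelTrans (R i)) : RelTrans (SigmaRel R) := by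
  intro B C D E ⟨i, hi⟩ hC hD
  by_contra hBE
  rw [preimage_union, preimage_union] at hi
  refine hBE ⟨i, htrans i _ _ _ _ hi (fun c hc => ?_) (fun d hd => ?_)⟩
  · rw [← sigma_mk_preimage_insert_self]
    exact (hC ⟨i, c⟩ hc).of_preimage_eq_of_ne hBE (fun _ _ => rfl)
      (fun _ hj => sigma_mk_preimage_insert_of_ne hj c E)
  · rw [← sigma_mk_preimage_insert_self]
    exact (hD ⟨i, d⟩ hd).of_preimage_eq_of_ne hBE
      (fun _ hj => sigma_mk_preimage_insert_of_ne hj d B) (fun _ _ => rfl)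

theorem SigmaRel.le_of_relMono {Q : Set (Σ i, A i) → Set (Σ i, A i) → Prop} (hQ : RelMono Q)
    (hRQ : ∀ (i : I) (B C : Set (A i)), R i B C → Q (Sigma.mk i '' B) (Sigma.mk i '' C))
    {B C : Set (Σ i, A i)} (h : SigmaRel R B C) : Q B C :=
  let ⟨i, hi⟩ := h
  hQ _ _ _ _ (image_preimage_subset _ _) (hRQ i _ _ hi) (image_preimage_subset _ _)

end SigmaRel

/-- Coproducts of distributive prepolyposets: given a family of sets `A i` with relations `R i`
satisfying monotonicity, reflexivity and transitivity, the relation `B ◁ C ↔ ∃ i,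
(A i ∩ B) ◁ᵢ (A i ∩ C)` on the disjoint union again satisfies these axioms and is the smallest
monotone relation whose restriction along each inclusion contains `R i`. -/
theorem stmt_15 {I : Type u} {A : I → Type v} (R : ∀ i, Set (A i) → Set (A i) → Prop)
    (hmono : ∀ i, RelMono (R i)) (hrefl : ∀ i, RelRefl (R i)) (htrans : ∀ i, RelTrans (R i)) :
    RelMono (fun B C : Set (Σ i, A i) => ∃ i, R i (Sigma.mk i ⁻¹' B) (Sigma.mk i ⁻¹' C)) ∧
    RelRefl (fun B C : Set (Σ i, A i) => ∃ i, R i (Sigma.mk i ⁻¹' B) (Sigma.mk i ⁻¹' C)) ∧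
    RelTrans (fun B C : Set (Σ i, A i) => ∃ i, R i (Sigma.mk i ⁻¹' B) (Sigma.mk i ⁻¹' C)) ∧
    ∀ Q : Set (Σ i, A i) → Set (Σ i, A i) → Prop, RelMono Q →
      (∀ (i : I) (B C : Set (A i)), R i B C → Q (Sigma.mk i '' B) (Sigma.mk i '' C)) →
      ∀ B C : Set (Σ i, A i), (∃ i, R i (Sigma.mk i ⁻¹' B) (Sigma.mk i ⁻¹' C)) → Q B C := by
  exact ⟨.sigmaRel hmono, .sigmaRel hrefl, .sigmaRel htrans,
    fun _ hQ hRQ _ _ => SigmaRel.le_of_relMono hQ hRQ⟩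
end

section
/- Let A be a set and ◁ a relation between finite subsets of A and arbitrary subsets of A satisfying: (monotonicity) if B ⊇ B₀, B₀ ◁ C₀ and C₀ ⊆ C then B ◁ C; (reflexivity) {a} ◁ {a} for every a ∈ A; and (transitivity) for finite B, C and arbitrary D, E: if B ∪ C ◁ D ∪ E, and B ◁ {c} ∪ E for every c ∈ C, and B ∪ {d} ◁ E for every d ∈ D, then B ◁ E. Let L be a frame and η : A → L a function such that the infimum of η over B is ≤ the supremum of η over C whenever B ◁ C, and which is universal: for every frame M and every function f : A → M satisfying the same implications, there is a unique frame homomorphism h : L → M with h ∘ η = f. Then η reflects ◁: for every finite subset B and arbitrary subset C of A, if the infimum of η over B is ≤ the supremum of η over C in L, then B ◁ C. -/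
/-! A finite set `B ⊆ A` stands for the meet of its elements, so down-sets of `(Finset A)ᵒᵈ`
form the free frame on `A`. Imposing `R` on it is the nucleus sending `U` to the finite sets
*covered* by `U`: those reached from `U` by the rule "if `R B C`, `B ⊆ B'` and every `insert c B'`
(`c ∈ C`) is covered, then `B'` is covered". In the resulting quotient frame, `⋀ B ≤ ⋁ C` means
that `B` is covered by the sets meeting `C`, and the cut rule (transitivity with nothing to cut
on the left) turns every such covering back into `R B C`. So this frame satisfies `R` and
reflects it, and the frame map out of `L` given by universality transports any inequality
`⋀ η B ≤ ⋁ η C` in `L` into it. -/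

universe u

open OrderDual

theorem Nucleus.restrict_le_restrict_iff {X : Type*} [Order.Frame X] (n : Nucleus X) {x y : X} :
    n.restrict x ≤ n.restrict y ↔ x ≤ n y :=
  n.giRestrict.gc _ _

theorem FrameHom.finset_inf_comp_le_sSup_image_comp {ι L M : Type*} [Order.Frame L]
    [Order.Frame M] (h : FrameHom L M) {η : ι → L} {B : Finset ι} {C : Set ι}
    (hle : B.inf η ≤ sSup (η '' C)) : B.inf (h ∘ η) ≤ sSup ((h ∘ η) '' C) := by
  rw [← map_finset_inf, Set.image_comp, ← map_sSup]
  exact OrderHomClass.mono h hle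

variable {A : Type*}

def coverGen (a : A) : LowerSet (Finset A)ᵒᵈ := LowerSet.Iic (toDual {a})

theorem mem_sSup_image_coverGen {C : Set A} {B : Finset A} :
    toDual B ∈ sSup (coverGen '' C) ↔ ∃ c ∈ C, c ∈ B := by
  simp [coverGen]

variable [DecidableEq A]

theorem finset_inf_coverGen (B : Finset A) : B.inf coverGen = LowerSet.Iic (toDual B) := by
  induction B using Finset.induction_on with
  | empty => ext; simp
  | insert a s _ ih =>
    ext B'
    simp [ih, coverGen, Finset.insert_subset_iff]

structure IsDistribPrepolyposet (R : Finset A → Set A → Prop) : Prop where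
  mono : ∀ (B₀ B : Finset A) (C₀ C : Set A), B₀ ⊆ B → R B₀ C₀ → C₀ ⊆ C → R B C
  refl : ∀ a : A, R {a} {a}
  trans : ∀ (B C : Finset A) (D E : Set A), R (B ∪ C) (D ∪ E) →
    (∀ c ∈ C, R B (insert c E)) → (∀ d ∈ D, R (insert d B) E) → R B E

namespace IsDistribPrepolyposet

variable {R : Finset A → Set A → Prop}

theorem of_mem (hR : IsDistribPrepolyposet R) {B : Finset A} {C : Set A} {c : A} (hcB : c ∈ B)
    (hcC : c ∈ C) : R B C :=
  hR.mono {c} B {c} C (Finset.singleton_subset_iff.2 hcB) (hR.refl c)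
    (Set.singleton_subset_iff.2 hcC)

theorem cut (hR : IsDistribPrepolyposet R) {B : Finset A} {D E : Set A} (hBD : R B D)
    (h : ∀ d ∈ D, R (insert d B) E) : R B E :=
  hR.trans B ∅ D E (hR.mono B _ D _ Finset.subset_union_left hBD Set.subset_union_left)
    (by simp) h

end IsDistribPrepolyposet

inductive Covered (R : Finset A → Set A → Prop) (U : LowerSet (Finset A)ᵒᵈ) : Finset A → Prop
  | of_mem {B : Finset A} : toDual B ∈ U → Covered R U B
  | step {B B' : Finset A} {C : Set A} : R B C → B ⊆ B' →
      (∀ c ∈ C, Covered R U (insert c B')) → Covered R U B'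

namespace Covered

variable {R : Finset A → Set A → Prop} {U V : LowerSet (Finset A)ᵒᵈ} {B B' : Finset A}

theorem of_subset (h : Covered R U B) (hBB' : B ⊆ B') : Covered R U B' := by
  induction h generalizing B' with
  | of_mem hB => exact of_mem (U.lower hBB' hB)
  | step hR hsub _ ih =>
    exact step hR (hsub.trans hBB') fun c hc => ih c hc (Finset.insert_subset_insert c hBB')

theorem mono (hUV : U ≤ V) (h : Covered R U B) : Covered R V B := by
  induction h with
  | of_mem hB => exact of_mem (hUV hB)
  | step hR hsub _ ih => exact step hR hsub ih

theorem inf_of_mem (hU : toDual B ∈ U) (hV : Covered R V B) : Covered R (U ⊓ V) B := by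
  induction hV with
  | of_mem hB => exact of_mem ⟨hU, hB⟩
  | step hR hsub _ ih =>
    exact step hR hsub fun c hc => ih c hc (U.lower (Finset.subset_insert c _) hU)

theorem inf (hU : Covered R U B) (hV : Covered R V B) : Covered R (U ⊓ V) B := by
  induction hU with
  | of_mem hB => exact inf_of_mem hB hV
  | step hR hsub _ ih =>
    exact step hR hsub fun c hc => ih c hc (hV.of_subset (Finset.subset_insert c _))

end Covered

def coverSet (R : Finset A → Set A → Prop) (U : LowerSet (Finset A)ᵒᵈ) :
    LowerSet (Finset A)ᵒᵈ :=
  ⟨{B | Covered R U (ofDual B)}, fun _ _ hle hB => hB.of_subset hle⟩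

theorem Covered.of_coverSet {R : Finset A → Set A → Prop} {U : LowerSet (Finset A)ᵒᵈ}
    {B : Finset A} (h : Covered R (coverSet R U) B) : Covered R U B := by
  induction h with
  | of_mem hB => exact hB
  | step hR hsub _ ih => exact step hR hsub ih

def coverNucleus (R : Finset A → Set A → Prop) : Nucleus (LowerSet (Finset A)ᵒᵈ) where
  toFun := coverSet R
  map_inf' _ _ := le_antisymm
    (le_inf (fun _ hB => Covered.mono inf_le_left hB) fun _ hB => Covered.mono inf_le_right hB)
    fun _ hB => Covered.inf hB.1 hB.2
  idempotent' _ _ hB := Covered.of_coverSet hB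
  le_apply' _ _ hB := Covered.of_mem hB

theorem covered_sSup_image_coverGen_iff {R : Finset A → Set A → Prop}
    (hR : IsDistribPrepolyposet R) {B : Finset A} {C : Set A} :
    Covered R (sSup (coverGen '' C)) B ↔ R B C := by
  refine ⟨fun h => ?_, fun h => .step h subset_rfl fun c hc => .of_mem ?_⟩
  · induction h with
    | of_mem hB =>
      obtain ⟨c, hcC, hcB⟩ := mem_sSup_image_coverGen.1 hB
      exact hR.of_mem hcB hcC
    | step hBD hsub _ ih => exact hR.cut (hR.mono _ _ _ _ hsub hBD subset_rfl) ih
  · exact mem_sSup_image_coverGen.2 ⟨c, hc, Finset.mem_insert_self c B⟩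

def presentation (R : Finset A → Set A → Prop) (a : A) : Set.range (coverNucleus R) :=
  (coverNucleus R).restrict (coverGen a)

theorem finset_inf_presentation_le_iff {R : Finset A → Set A → Prop}
    (hR : IsDistribPrepolyposet R) {B : Finset A} {C : Set A} :
    B.inf (presentation R) ≤ sSup (presentation R '' C) ↔ R B C := by
  have hcomp : presentation R = (coverNucleus R).restrict ∘ coverGen := rfl
  rw [hcomp, ← map_finset_inf, Set.image_comp, ← map_sSup, Nucleus.restrict_le_restrict_iff,
    finset_inf_coverGen, LowerSet.Iic_le]
  exact covered_sSup_image_coverGen_iff hR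

theorem stmt_16_general {A L : Type u} [DecidableEq A] [Order.Frame L]
    (R : Finset A → Set A → Prop)
    (hmono : ∀ (B₀ B : Finset A) (C₀ C : Set A), B₀ ⊆ B → R B₀ C₀ → C₀ ⊆ C → R B C)
    (hrefl : ∀ a : A, R {a} {a})
    (htrans : ∀ (B C : Finset A) (D E : Set A), R (B ∪ C) (D ∪ E) →
      (∀ c ∈ C, R B (insert c E)) → (∀ d ∈ D, R (insert d B) E) → R B E)
    (η : A → L)
    (huniv : ∀ (M : Type u) [Order.Frame M] (f : A → M),
      (∀ (B : Finset A) (C : Set A), R B C → B.inf f ≤ sSup (f '' C)) →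
      ∃! h : FrameHom L M, ∀ a : A, h (η a) = f a) :
    ∀ (B : Finset A) (C : Set A), B.inf η ≤ sSup (η '' C) → R B C := by
  intro B C hBC
  have hR : IsDistribPrepolyposet R := ⟨hmono, hrefl, htrans⟩
  obtain ⟨h, hh, -⟩ := huniv _ (presentation R) fun _ _ => (finset_inf_presentation_le_iff hR).2
  rw [← finset_inf_presentation_le_iff hR, ← funext hh]
  exact h.finset_inf_comp_le_sSup_image_comp hBC

/-- **Saturation for (ω,∞)-distributive prepolyposets.** If `(A, R)` is a relation between finite
subsets and arbitrary subsets of `A` satisfying monotonicity, reflexivity and transitivity, and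
`η : A → L` presents the frame `L` subject to the relations `R`, then `η` reflects `R`: any
inequality `⨅_{b ∈ B} η b ≤ ⨆_{c ∈ C} η c` holding in `L` is already recorded in `R`. -/
theorem stmt_16 {A L : Type u} [DecidableEq A] [Order.Frame L]
    (R : Finset A → Set A → Prop)
    (hmono : ∀ (B₀ B : Finset A) (C₀ C : Set A), B₀ ⊆ B → R B₀ C₀ → C₀ ⊆ C → R B C)
    (hrefl : ∀ a : A, R {a} {a})
    (htrans : ∀ (B C : Finset A) (D E : Set A), R (B ∪ C) (D ∪ E) →
      (∀ c ∈ C, R B (insert c E)) → (∀ d ∈ D, R (insert d B) E) → R B E)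
    (η : A → L)
    (hη : ∀ (B : Finset A) (C : Set A), R B C → B.inf η ≤ sSup (η '' C))
    (huniv : ∀ (M : Type u) [Order.Frame M] (f : A → M),
      (∀ (B : Finset A) (C : Set A), R B C → B.inf f ≤ sSup (f '' C)) →
      ∃! h : FrameHom L M, ∀ a : A, h (η a) = f a) :
    ∀ (B : Finset A) (C : Set A), B.inf η ≤ sSup (η '' C) → R B C :=
  stmt_16_general R hmono hrefl htrans η huniv
end

section
/- Let A be a zero-dimensional frame, i.e., a frame in which every element is a supremum of complemented elements. Then the following are equivalent: (i) A is ultraparacompact: every subset S ⊆ A with sSup S = ⊤ refines to a pairwise disjoint subset T with sSup T = ⊤; (ii) every complemented a ∈ A is ultraparacompact: whenever a ≤ sSup S, there is a pairwise disjoint subset T refining S with a ≤ sSup T; (iii) for every complemented a ∈ A, every cover of a by complemented elements refines to a pairwise disjoint cover of a; (iv) for every complemented a ∈ A, every cover of a refines to a pairwise disjoint cover of a consisting of complemented elements. -/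
/-!
To pass from the frame to a complemented `a` with complement `a'`, cover `⊤` by `S ∪ {a'}`,
refine, and discard the members lying under `a'`. Meeting a disjoint refinement covering `a` with
`a` gives a disjoint family `U` with `⨆ U = a`, and each `u ∈ U` is then complemented, with
complement `a' ⊔ ⨆ (U \ {u})`. Conversely, zero-dimensionality lets one replace a cover of `⊤` by
the complemented elements below its members, and `⊤` is complemented.
-/

universe u

section CompleteLattice

variable {A : Type*} [CompleteLattice A]

theorem sSup_le_sSup_setOf_and_exists_le {P : A → Prop}
    (hP : ∀ a : A, ∃ B : Set A, (∀ b ∈ B, P b) ∧ sSup B = a) (S : Set A) :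
    sSup S ≤ sSup {b | P b ∧ ∃ s ∈ S, b ≤ s} := by
  refine sSup_le fun s hs => ?_
  obtain ⟨B, hBP, rfl⟩ := hP s
  exact sSup_le_sSup fun b hb => ⟨hBP b hb, sSup B, hs, le_sSup hb⟩

theorem IsCompl.sSup_insert_eq_top {a a' : A} (ha : IsCompl a a') {S : Set A}
    (haS : a ≤ sSup S) : sSup (insert a' S) = ⊤ := by
  rw [sSup_insert, eq_top_iff, ← ha.sup_eq_top, sup_comm]
  exact sup_le_sup_left haS a'

end CompleteLattice

section Frame

variable {A : Type*} [Order.Frame A]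

theorem sSup_image_inf_right (T : Set A) (a : A) : sSup ((· ⊓ a) '' T) = sSup T ⊓ a := by
  rw [sSup_inf_eq, sSup_image]

theorem Set.Pairwise.image_inf_right {T : Set A} (hT : T.Pairwise (· ⊓ · = ⊥)) (a : A) :
    ((· ⊓ a) '' T).Pairwise (· ⊓ · = ⊥) := by
  rintro _ ⟨t₁, ht₁, rfl⟩ _ ⟨t₂, ht₂, rfl⟩ hne
  refine le_bot_iff.mp ?_
  rw [← hT ht₁ ht₂ fun h => hne (h ▸ rfl)]
  exact inf_le_inf inf_le_left inf_le_left

theorem IsComplemented.of_mem_of_pairwise_of_sSup_eq {U : Set A} (hU : U.Pairwise (· ⊓ · = ⊥))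
    {a : A} (ha : IsComplemented a) (hUa : sSup U = a) {u : A} (hu : u ∈ U) :
    IsComplemented u := by
  obtain ⟨a', ha'⟩ := ha
  have hdisj : Disjoint u (sSup (U \ {u})) :=
    disjoint_sSup_iff.mpr fun v hv => disjoint_iff.mpr (hU hu hv.1 fun h => hv.2 h.symm)
  have hsup : u ⊔ sSup (U \ {u}) = a := by
    rw [← sSup_insert, Set.insert_sdiff_singleton, Set.insert_eq_of_mem hu, hUa]
  exact ⟨_, hdisj.isCompl_sup_right_of_isCompl_sup_left (hsup ▸ ha')⟩

theorem IsCompl.le_sSup_sep_of_refines_insert {a a' : A} (ha : IsCompl a a') {S T : Set A}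
    (hTS : ∀ t ∈ T, ∃ s ∈ insert a' S, t ≤ s) (hT : sSup T = ⊤) :
    a ≤ sSup {t ∈ T | ∃ s ∈ S, t ≤ s} := by
  refine Disjoint.left_le_of_le_sup_right (c := a') ?_ ha.disjoint
  rw [sup_comm, ← sSup_insert]
  refine le_top.trans (hT ▸ sSup_le fun t ht => ?_)
  obtain ⟨s, rfl | hs, hts⟩ := hTS t ht
  · exact hts.trans (le_sSup (Set.mem_insert _ _))
  · exact le_sSup (Set.mem_insert_of_mem _ ⟨ht, s, hs, hts⟩)

end Frame

/-- Characterizations of ultraparacompactness for a zero-dimensional frame. -/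
theorem stmt_17 {A : Type u} [Order.Frame A]
    (hzd : ∀ a : A, ∃ S : Set A, (∀ b ∈ S, ∃ b' : A, IsCompl b b') ∧ sSup S = a) :
    List.TFAE
      [∀ S : Set A, sSup S = ⊤ →
          ∃ T : Set A, (∀ t ∈ T, ∃ s ∈ S, t ≤ s) ∧
            (∀ t₁ ∈ T, ∀ t₂ ∈ T, t₁ ≠ t₂ → t₁ ⊓ t₂ = ⊥) ∧ sSup T = ⊤,
        ∀ a : A, (∃ a' : A, IsCompl a a') → ∀ S : Set A, a ≤ sSup S →
          ∃ T : Set A, (∀ t ∈ T, ∃ s ∈ S, t ≤ s) ∧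
            (∀ t₁ ∈ T, ∀ t₂ ∈ T, t₁ ≠ t₂ → t₁ ⊓ t₂ = ⊥) ∧ a ≤ sSup T,
        ∀ a : A, (∃ a' : A, IsCompl a a') → ∀ S : Set A, (∀ s ∈ S, ∃ s' : A, IsCompl s s') →
          a ≤ sSup S →
          ∃ T : Set A, (∀ t ∈ T, ∃ s ∈ S, t ≤ s) ∧
            (∀ t₁ ∈ T, ∀ t₂ ∈ T, t₁ ≠ t₂ → t₁ ⊓ t₂ = ⊥) ∧ a ≤ sSup T,
        ∀ a : A, (∃ a' : A, IsCompl a a') → ∀ S : Set A, a ≤ sSup S →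
          ∃ T : Set A, (∀ t ∈ T, ∃ s ∈ S, t ≤ s) ∧
            (∀ t₁ ∈ T, ∀ t₂ ∈ T, t₁ ≠ t₂ → t₁ ⊓ t₂ = ⊥) ∧
            (∀ t ∈ T, ∃ t' : A, IsCompl t t') ∧ a ≤ sSup T] := by
  tfae_have 1 → 2 := by
    rintro h1 a ⟨a', ha⟩ S haS
    obtain ⟨T, hTS, hT, hTtop⟩ := h1 (insert a' S) (ha.sSup_insert_eq_top haS)
    exact ⟨{t ∈ T | ∃ s ∈ S, t ≤ s}, fun t ht => ht.2, fun t₁ ht₁ t₂ ht₂ => hT t₁ ht₁.1 t₂ ht₂.1,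
      ha.le_sSup_sep_of_refines_insert hTS hTtop⟩
  tfae_have 2 → 4 := by
    intro h2 a ha S haS
    obtain ⟨T, hTS, hT, haT⟩ := h2 a ha S haS
    have hT' := Set.Pairwise.image_inf_right hT a
    have hsup : sSup ((· ⊓ a) '' T) = a := by rwa [sSup_image_inf_right, inf_eq_right]
    refine ⟨(· ⊓ a) '' T, ?_, hT', ?_, hsup.ge⟩
    · rintro _ ⟨t, ht, rfl⟩
      obtain ⟨s, hs, hts⟩ := hTS t ht
      exact ⟨s, hs, inf_le_left.trans hts⟩
    · exact fun u hu => IsComplemented.of_mem_of_pairwise_of_sSup_eq hT' ha hsup hu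
  tfae_have 4 → 3 := fun h4 a ha S _ haS =>
    let ⟨T, hTS, hT, _, haT⟩ := h4 a ha S haS
    ⟨T, hTS, hT, haT⟩
  tfae_have 3 → 1 := by
    intro h3 S hS
    obtain ⟨T, hTB, hT, hTtop⟩ := h3 ⊤ isComplemented_top _ (fun b hb => hb.1)
      (hS ▸ sSup_le_sSup_setOf_and_exists_le hzd S)
    refine ⟨T, fun t ht => ?_, hT, top_unique hTtop⟩
    obtain ⟨b, ⟨-, s, hs, hbs⟩, htb⟩ := hTB t ht
    exact ⟨s, hs, htb.trans hbs⟩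
  tfae_finish
end

section
/- Cut admissibility holds for the finitary one-sided sequent calculus for infinitary propositional logic: for every set X, every finite set A of prenex complete Boolean terms over X, and every term a, if A ∪ {a} is derivable and A ∪ {¬a} is derivable, then A is derivable. -/
universe u

/-- Prenex complete Boolean terms over a set `X`: literals `x`, `¬x` for `x ∈ X`, closed under
set-indexed conjunctions and disjunctions. -/
inductive PTerm (X : Type u) : Type (u + 1)
  | var : X → PTerm X
  | nvar : X → PTerm X
  | conj : {ι : Type u} → (ι → PTerm X) → PTerm X
  | disj : {ι : Type u} → (ι → PTerm X) → PTerm X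

namespace PTerm

/-- Negation: the involution on prenex terms interchanging `x` with `¬x` and `⋀` with `⋁`. -/
def compl {X : Type u} : PTerm X → PTerm X
  | var x => nvar x
  | nvar x => var x
  | conj t => disj fun i => (t i).compl
  | disj t => conj fun i => (t i).compl

end PTerm

/-- The finitary one-sided sequent calculus for infinitary propositional logic, deriving
(finite) sets of prenex terms. -/
inductive FDer {X : Type u} : Set (PTerm X) → Prop
  | id {A : Set (PTerm X)} (x : X) : PTerm.var x ∈ A → PTerm.nvar x ∈ A → FDer A
  | conj {A : Set (PTerm X)} {ι : Type u} (t : ι → PTerm X) :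
      PTerm.conj t ∈ A → (∀ i : ι, FDer (insert (t i) A)) → FDer A
  | disj {A : Set (PTerm X)} {ι : Type u} (t : ι → PTerm X) (i : ι) :
      PTerm.disj t ∈ A → FDer (insert (t i) A) → FDer A

/-!
Cut admissibility is proved by induction on the cut formula, and for each formula by induction on
one of the two derivations. For a variable `x` one inducts on the derivation containing `x`: an
identity axiom using `x` is replaced by the other derivation, which contains `¬x`. For `⋀ t` one
inducts on the derivation containing `⋁ (¬ t i)`; when that formula is principal with premise
`¬ t j`, the ⋀-rule is inverted in the other derivation and the cut is made on `t j`. The cases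
`¬x` and `⋁ t` follow by the symmetry of the cut under complementation.
-/

namespace FDer

variable {X : Type u}

theorem mono {A B : Set (PTerm X)} (h : FDer A) (hAB : A ⊆ B) : FDer B := by
  induction h generalizing B with
  | id x hv hn => exact .id x (hAB hv) (hAB hn)
  | conj t ht _ ih => exact .conj t (hAB ht) fun i => ih i (Set.insert_subset_insert hAB)
  | disj t i ht _ ih => exact .disj t i (hAB ht) (ih (Set.insert_subset_insert hAB))

theorem conj_inversion {Γ : Set (PTerm X)} (h : FDer Γ) {ι : Type u} (t : ι → PTerm X)
    (i : ι) : FDer (insert (t i) (Γ \ {PTerm.conj t})) := by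
  induction h with
  | id y hv hn => exact .id y (.inr ⟨hv, by simp⟩) (.inr ⟨hn, by simp⟩)
  | conj s hs _ ih =>
    by_cases hst : PTerm.conj s = PTerm.conj t
    · obtain ⟨rfl, hs'⟩ := PTerm.conj.inj hst
      obtain rfl := eq_of_heq hs'
      exact (ih i).mono (by grind)
    · exact .conj s (.inr ⟨hs, hst⟩) fun j => (ih j).mono (by grind)
  | disj s j hs _ ih => exact .disj s j (.inr ⟨hs, by simp⟩) (ih.mono (by grind))

end FDer

theorem PTerm.compl_compl {X : Type u} : ∀ a : PTerm X, a.compl.compl = a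
  | .var _ => rfl
  | .nvar _ => rfl
  | .conj t => congrArg PTerm.conj (funext fun i => (t i).compl_compl)
  | .disj t => congrArg PTerm.disj (funext fun i => (t i).compl_compl)

section CutAdmissible

variable {X : Type u}

/-- Phrased with set differences rather than `insert` so that it can be proved by induction on
the derivations of arbitrary `Γ` and `Δ`. -/
def CutAdmissible (a : PTerm X) : Prop :=
  ∀ Γ Δ : Set (PTerm X), FDer Γ → FDer Δ → FDer (Γ \ {a} ∪ Δ \ {a.compl})

theorem CutAdmissible.compl {a : PTerm X} (h : CutAdmissible a) : CutAdmissible a.compl := by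
  intro Γ Δ hΓ hΔ
  rw [PTerm.compl_compl]
  exact (h Δ Γ hΔ hΓ).mono (Set.union_comm _ _).subset

theorem cutAdmissible_var (x : X) : CutAdmissible (PTerm.var x) := by
  intro Γ Δ hΓ hΔ
  induction hΓ with
  | id y hv hn =>
    by_cases hxy : y = x
    · subst hxy
      exact hΔ.mono (by grind [PTerm.compl])
    · exact .id y (.inl ⟨hv, by simp [hxy]⟩) (.inl ⟨hn, by simp⟩)
  | conj t ht _ ih => exact .conj t (.inl ⟨ht, by simp⟩) fun i => (ih i).mono (by grind)
  | disj t i ht _ ih => exact .disj t i (.inl ⟨ht, by simp⟩) (ih.mono (by grind))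

theorem cutAdmissible_conj {ι : Type u} {t : ι → PTerm X} (ht : ∀ i, CutAdmissible (t i)) :
    CutAdmissible (PTerm.conj t) := by
  intro Γ Δ hΓ hΔ
  induction hΔ with
  | id y hv hn =>
    exact .id y (.inr ⟨hv, by simp [PTerm.compl]⟩) (.inr ⟨hn, by simp [PTerm.compl]⟩)
  | conj s hs _ ih =>
    exact .conj s (.inr ⟨hs, by simp [PTerm.compl]⟩) fun j => (ih j).mono (by grind)
  | @disj Δ κ s j hs _ ih =>
    by_cases hst : PTerm.disj s = (PTerm.conj t).compl
    · obtain ⟨rfl, hs'⟩ := PTerm.disj.inj hst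
      obtain rfl := eq_of_heq hs'
      have hΔ' : FDer (insert (t j).compl (Γ \ {PTerm.conj t} ∪ Δ \ {(PTerm.conj t).compl})) :=
        ih.mono (by grind)
      exact (ht j _ _ (hΓ.conj_inversion t j) hΔ').mono (by grind)
    · exact .disj s j (.inr ⟨hs, hst⟩) (ih.mono (by grind))

theorem cutAdmissible : ∀ a : PTerm X, CutAdmissible a
  | .var x => cutAdmissible_var x
  | .nvar x => (cutAdmissible_var x).compl
  | .conj t => cutAdmissible_conj fun i => cutAdmissible (t i)
  | .disj t => by
    simpa only [PTerm.compl, PTerm.compl_compl] using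
      (cutAdmissible_conj fun i => (cutAdmissible (t i)).compl).compl

end CutAdmissible

theorem stmt_18_general {X : Type u} (A : Set (PTerm X)) (a : PTerm X)
    (h₁ : FDer (insert a A)) (h₂ : FDer (insert a.compl A)) : FDer A :=
  (cutAdmissible a _ _ h₁ h₂).mono (by grind)

/-- **Cut admissibility** for the finitary sequent calculus: if `A ∪ {a}` and `A ∪ {¬a}` are
derivable, for a finite set of terms `A`, then so is `A`. -/
theorem stmt_18 {X : Type u} (A : Set (PTerm X)) (hA : A.Finite) (a : PTerm X)
    (h₁ : FDer (insert a A)) (h₂ : FDer (insert a.compl A)) : FDer A :=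
  stmt_18_general A a h₁ h₂
end
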